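/- arXiv:1610.01401 — 5 statements merged into one kernel-verified Lean document; each statement's English description precedes it below -/
import Mathlib

section
/- Let d ≥ 1 be an integer and let g(z) = Σ_{n≥0} g_n z^n belong to the class S_d with radius of convergence ρ. Then for each ε > 0 there exist a constant c(ε) > 0 and an integer n₀ > 0 such that for all integers n ≥ n₀ with d | n and every integer k ≥ 0, one has [z^n] g(z)^k ≤ c(ε)·(g(ρ) + ε)^k·[z^n] g(z). -/
/-- A power series with coefficient sequence `g`, non-negative coefficients and radius of
convergence `ρ ∈ (0,∞)`, belongs to the class `𝒮_d`: coefficients vanish off the lattice `dℕ`,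
are eventually positive along `dℕ`, `g(ρ) < ∞`, the radius of convergence is exactly `ρ`, and
along multiples of `d` one has `g_n / g_{n+d} → ρ^d` and
`(1/g_n) · ∑_{i+j=n} g_i g_j → 2 g(ρ)`. -/
def SubexpClass (d : ℕ) (g : ℕ → ℝ) (ρ : ℝ) : Prop :=
  1 ≤ d ∧ 0 < ρ ∧ (∀ n, 0 ≤ g n) ∧
  (∀ n, ¬ d ∣ n → g n = 0) ∧
  (∃ N, ∀ n, N ≤ n → d ∣ n → 0 < g n) ∧
  Summable (fun n => g n * ρ ^ n) ∧
  (∀ r : ℝ, ρ < r → ¬ Summable (fun n => g n * r ^ n)) ∧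
  Filter.Tendsto (fun m => g (d * m) / g (d * m + d)) Filter.atTop (nhds (ρ ^ d)) ∧
  Filter.Tendsto
    (fun m => (∑ i ∈ Finset.range (d * m + 1), g i * g (d * m - i)) / g (d * m))
    Filter.atTop (nhds (2 * ∑' n, g n * ρ ^ n))

/-!
Passing to `b_m = g_{dm} ρ^{dm}` reduces everything to `d = 1`, `ρ = 1`: then `b_m / b_{m+1} → 1`
and `(b * b)_m / b_m → 2B` with `B = ∑ b_m`. Iterating the ratio limit gives `b_{m-i} / b_m → 1`
for each fixed `i`, so for a cut `n₀` with `∑_{i<n₀} b_i > B - ε/3` the part of `(b * b)_m` with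
first index `< n₀` is eventually at least `(B - ε/3) b_m`, leaving at most `(B + 2ε/3) b_m` for
the rest. Now induct on `k`: split `[z^m] b(z)^{k+1} = ∑_i [z^i] b(z)^k · b_{m-i}` at `n₀`. The
head is at most `B^k ∑_{i<n₀} b_{m-i} = O(b_m)`, the tail at most `c (B+ε)^k (B + 2ε/3) b_m` by
induction, and a large `c` absorbs both the head and the finitely many `m` below the range where
the asymptotics hold.
-/

open Filter Finset PowerSeries Topology

theorem coeff_mk_pow_succ {R : Type*} [CommSemiring R] (f : ℕ → R) (k n : ℕ) :
    coeff n (mk f ^ (k + 1)) = ∑ i ∈ range (n + 1), coeff i (mk f ^ k) * f (n - i) := by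
  rw [pow_succ, coeff_mul,
    Nat.sum_antidiagonal_eq_sum_range_succ fun i j => coeff i (mk f ^ k) * coeff j (mk f)]
  simp only [coeff_mk]

theorem coeff_mk_sq {R : Type*} [CommSemiring R] (f : ℕ → R) (n : ℕ) :
    coeff n (mk f ^ 2) = ∑ i ∈ range (n + 1), f i * f (n - i) := by
  simpa using coeff_mk_pow_succ f 1 n

section NonnegCoefficients

variable {b : ℕ → ℝ}

theorem coeff_mk_pow_le_tsum_pow (hb : ∀ n, 0 ≤ b n) (hs : Summable b) (k n : ℕ) :
    coeff n (mk b ^ k) ≤ (∑' i, b i) ^ k := by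
  induction k generalizing n with
  | zero =>
    rw [pow_zero, pow_zero, coeff_one]
    split_ifs <;> norm_num
  | succ k ih =>
    rw [pow_succ', coeff_mul,
      Nat.sum_antidiagonal_eq_sum_range_succ fun i j => coeff i (mk b) * coeff j (mk b ^ k)]
    calc ∑ i ∈ range (n + 1), coeff i (mk b) * coeff (n - i) (mk b ^ k)
        ≤ ∑ i ∈ range (n + 1), b i * (∑' i, b i) ^ k :=
          sum_le_sum fun i _ => by rw [coeff_mk]; exact mul_le_mul_of_nonneg_left (ih _) (hb i)
      _ ≤ (∑' i, b i) * (∑' i, b i) ^ k := by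
          rw [← sum_mul]
          exact mul_le_mul_of_nonneg_right (hs.sum_le_tsum _ fun i _ => hb i)
            (pow_nonneg (tsum_nonneg hb) k)
      _ = (∑' i, b i) ^ (k + 1) := (pow_succ' _ _).symm

theorem coeff_mk_pow_succ_le_split (hb : ∀ n, 0 ≤ b n) {k n n₀ : ℕ} {A L : ℝ}
    (hn₀ : n₀ ≤ n + 1) (hhead : ∀ i < n₀, coeff i (mk b ^ k) ≤ A)
    (htail : ∀ i, n₀ ≤ i → coeff i (mk b ^ k) ≤ L * b i) :
    coeff n (mk b ^ (k + 1)) ≤ A * ∑ i ∈ range n₀, b (n - i) +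
      L * (coeff n (mk b ^ 2) - ∑ i ∈ range n₀, b i * b (n - i)) := by
  rw [coeff_mk_pow_succ, coeff_mk_sq, ← sum_range_add_sum_Ico _ hn₀,
    ← sum_range_add_sum_Ico _ hn₀, add_sub_cancel_left, mul_sum, mul_sum]
  refine add_le_add (sum_le_sum fun i hi => ?_) (sum_le_sum fun i hi => ?_)
  · exact mul_le_mul_of_nonneg_right (hhead i (mem_range.1 hi)) (hb _)
  · calc coeff i (mk b ^ k) * b (n - i) ≤ L * b i * b (n - i) :=
          mul_le_mul_of_nonneg_right (htail i (mem_Ico.1 hi).1) (hb _)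
      _ = L * (b i * b (n - i)) := mul_assoc _ _ _

end NonnegCoefficients

theorem tendsto_div_sub_of_tendsto_div_succ {b : ℕ → ℝ} (hne : ∀ᶠ n in atTop, b n ≠ 0)
    (h : Tendsto (fun n => b n / b (n + 1)) atTop (𝓝 1)) (j : ℕ) :
    Tendsto (fun n => b (n - j) / b n) atTop (𝓝 1) := by
  induction j with
  | zero =>
    refine tendsto_const_nhds.congr' ?_
    filter_upwards [hne] with n hn
    rw [Nat.sub_zero, div_self hn]
  | succ j ih =>
    have hstep : Tendsto (fun n => b (n - (j + 1)) / b (n - j)) atTop (𝓝 1) := by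
      refine (h.comp (tendsto_sub_atTop_nat (j + 1))).congr' ?_
      filter_upwards [eventually_ge_atTop (j + 1)] with n hn
      simp only [Function.comp_apply, show n - (j + 1) + 1 = n - j by omega]
    have hne' : ∀ᶠ n in atTop, b (n - j) ≠ 0 := tendsto_sub_atTop_nat j hne
    refine (mul_one (1 : ℝ) ▸ hstep.mul ih).congr' ?_
    filter_upwards [hne'] with n hn
    exact div_mul_div_cancel₀ hn

section EventualBounds

variable {α : Type*} {l : Filter α} {f b : α → ℝ} {L M : ℝ}

theorem eventually_le_mul_of_tendsto_div (hb : ∀ᶠ x in l, 0 < b x)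
    (h : Tendsto (fun x => f x / b x) l (𝓝 L)) (hLM : L < M) : ∀ᶠ x in l, f x ≤ M * b x := by
  filter_upwards [hb, h.eventually (eventually_lt_nhds hLM)] with x hbx hx
  exact ((div_lt_iff₀ hbx).1 hx).le

theorem eventually_mul_le_of_tendsto_div (hb : ∀ᶠ x in l, 0 < b x)
    (h : Tendsto (fun x => f x / b x) l (𝓝 L)) (hML : M < L) : ∀ᶠ x in l, M * b x ≤ f x := by
  filter_upwards [hb, h.eventually (eventually_gt_nhds hML)] with x hbx hx
  exact ((lt_div_iff₀ hbx).1 hx).le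

end EventualBounds

theorem coeff_mk_pow_le_of_bounds {b : ℕ → ℝ} (hb : ∀ n, 0 ≤ b n) (hs : Summable b)
    {ε c : ℝ} {n₀ N : ℕ} (hε : 0 ≤ ε) (hc : 0 ≤ c) (hn₀ : 0 < n₀)
    (hwindow : ∀ n, n₀ ≤ n → n < N → 1 ≤ c * b n)
    (hshift : ∀ n, N ≤ n → ∑ i ∈ range n₀, b (n - i) ≤ c * (ε / 3) * b n)
    (hsq : ∀ n, N ≤ n → coeff n (mk b ^ 2) ≤ (2 * ∑' i, b i + ε / 3) * b n)
    (hhead : ∀ n, N ≤ n → ((∑' i, b i) - ε / 3) * b n ≤ ∑ i ∈ range n₀, b i * b (n - i))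
    (n : ℕ) (hn : n₀ ≤ n) (k : ℕ) :
    coeff n (mk b ^ k) ≤ c * ((∑' i, b i) + ε) ^ k * b n := by
  set B := ∑' i, b i
  have hB : 0 ≤ B := tsum_nonneg hb
  have hpow : ∀ k i, coeff i (mk b ^ k) ≤ (B + ε) ^ k := fun k i =>
    (coeff_mk_pow_le_tsum_pow hb hs k i).trans (by gcongr; linarith)
  induction k generalizing n with
  | zero =>
    rw [pow_zero, coeff_one, if_neg (by omega)]
    exact mul_nonneg (by simpa using hc) (hb n)
  | succ k ih =>
    rcases lt_or_ge n N with hnN | hNn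
    · calc coeff n (mk b ^ (k + 1)) ≤ (B + ε) ^ (k + 1) * 1 := by simpa using hpow (k + 1) n
        _ ≤ (B + ε) ^ (k + 1) * (c * b n) := by gcongr; exact hwindow n hn hnN
        _ = c * (B + ε) ^ (k + 1) * b n := by ring
    · calc coeff n (mk b ^ (k + 1))
          ≤ (B + ε) ^ k * ∑ i ∈ range n₀, b (n - i) +
              c * (B + ε) ^ k * (coeff n (mk b ^ 2) - ∑ i ∈ range n₀, b i * b (n - i)) :=
            coeff_mk_pow_succ_le_split hb (by omega) (fun i _ => hpow k i) ih
        _ ≤ (B + ε) ^ k * (c * (ε / 3) * b n) + c * (B + ε) ^ k * ((B + 2 * ε / 3) * b n) := by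
            gcongr
            · exact hshift n hNn
            · linarith [hsq n hNn, hhead n hNn]
        _ = c * (B + ε) ^ (k + 1) * b n := by ring

/-- The class `𝒮_1` normalised to radius of convergence `1`. -/
structure IsSubexponential (b : ℕ → ℝ) : Prop where
  nonneg : ∀ n, 0 ≤ b n
  eventually_pos : ∀ᶠ n in atTop, 0 < b n
  summable : Summable b
  tendsto_div_succ : Tendsto (fun n => b n / b (n + 1)) atTop (𝓝 1)
  tendsto_coeff_sq_div : Tendsto (fun n => coeff n (mk b ^ 2) / b n) atTop (𝓝 (2 * ∑' n, b n))

theorem coeff_mk_pow_le_of_isSubexponential {b : ℕ → ℝ} (hb : IsSubexponential b) {ε : ℝ}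
    (hε : 0 < ε) : ∃ c > 0, ∃ n₀, ∀ n, n₀ ≤ n → ∀ k,
      coeff n (mk b ^ k) ≤ c * ((∑' i, b i) + ε) ^ k * b n := by
  set B := ∑' i, b i
  obtain ⟨N₀, hN₀⟩ := eventually_atTop.1 hb.eventually_pos
  obtain ⟨n₀, hcut, hn₀⟩ := ((hb.summable.hasSum.tendsto_sum_nat.eventually
    (eventually_gt_nhds (by linarith : B - ε / 3 < B))).and (eventually_ge_atTop (N₀ + 1))).exists
  have hsub := tendsto_div_sub_of_tendsto_div_succ (hb.eventually_pos.mono fun _ h => h.ne')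
    hb.tendsto_div_succ
  have hshift : Tendsto (fun n => (∑ i ∈ range n₀, b (n - i)) / b n) atTop (𝓝 n₀) := by
    simpa [sum_div] using tendsto_finsetSum (range n₀) fun i _ => hsub i
  have hhead : Tendsto (fun n => (∑ i ∈ range n₀, b i * b (n - i)) / b n) atTop
      (𝓝 (∑ i ∈ range n₀, b i)) := by
    simpa [sum_div, mul_div_assoc] using
      tendsto_finsetSum (range n₀) fun i _ => (hsub i).const_mul (b i)
  obtain ⟨N, hN⟩ := eventually_atTop.1 <|
    (eventually_le_mul_of_tendsto_div hb.eventually_pos hshift (lt_add_one (n₀ : ℝ))).and <|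
    (eventually_le_mul_of_tendsto_div hb.eventually_pos hb.tendsto_coeff_sq_div
      (by linarith : 2 * B < 2 * B + ε / 3)).and
    (eventually_mul_le_of_tendsto_div hb.eventually_pos hhead hcut)
  have hinv_nonneg : ∀ n ∈ Ico n₀ N, 0 ≤ (b n)⁻¹ := fun n hn =>
    inv_nonneg.2 (hN₀ n (by rw [mem_Ico] at hn; omega)).le
  set c := 3 * (n₀ + 1) / ε + ∑ n ∈ Ico n₀ N, (b n)⁻¹
  have hinv : ∀ n ∈ Ico n₀ N, (b n)⁻¹ ≤ c := fun n hn =>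
    (single_le_sum hinv_nonneg hn).trans (le_add_of_nonneg_left (by positivity))
  have hcε : (n₀ : ℝ) + 1 ≤ c * (ε / 3) := by
    have : 3 * (n₀ + 1) / ε ≤ c := le_add_of_nonneg_right (sum_nonneg hinv_nonneg)
    rw [div_le_iff₀ hε] at this
    linarith
  have hc : 0 < c := by nlinarith
  refine ⟨c, hc, n₀,
    coeff_mk_pow_le_of_bounds (N := N) hb.nonneg hb.summable hε.le hc.le (by omega : 0 < n₀) ?_ ?_ ?_ ?_⟩
  · intro n hn hnN
    have hbn := hN₀ n (by omega)
    calc (1 : ℝ) = (b n)⁻¹ * b n := (inv_mul_cancel₀ hbn.ne').symm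
      _ ≤ c * b n := by gcongr; exact hinv n (mem_Ico.2 ⟨hn, hnN⟩)
  · exact fun n hn => (hN n hn).1.trans (by gcongr; exact hb.nonneg n)
  · exact fun n hn => (hN n hn).2.1
  · exact fun n hn => (hN n hn).2.2

def latticeRescale {R : Type*} [Semiring R] (d : ℕ) (ρ : R) (g : ℕ → R) (m : ℕ) : R :=
  g (d * m) * ρ ^ (d * m)

theorem coeff_mk_pow_latticeRescale {R : Type*} [CommRing R] {d : ℕ} (hd : d ≠ 0) {g : ℕ → R}
    (hg : ∀ n, ¬ d ∣ n → g n = 0) (ρ : R) (k m : ℕ) :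
    coeff m (mk (latticeRescale d ρ g) ^ k) = coeff (d * m) (mk g ^ k) * ρ ^ (d * m) := by
  have h : rescale ρ (mk g) = expand d hd (mk (latticeRescale d ρ g)) := by
    ext n
    rw [coeff_rescale, coeff_mk, coeff_expand]
    split_ifs with hdn
    · obtain ⟨m, rfl⟩ := hdn
      rw [coeff_mk, Nat.mul_div_cancel_left _ (Nat.pos_of_ne_zero hd), latticeRescale, mul_comm]
    · rw [hg n hdn, mul_zero]
  calc coeff m (mk (latticeRescale d ρ g) ^ k)
      = coeff (d * m) (expand d hd (mk (latticeRescale d ρ g) ^ k)) := (coeff_expand_mul ..).symm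
    _ = coeff (d * m) (rescale ρ (mk g ^ k)) := by
      rw [map_pow (expand d hd), ← h, map_pow (rescale ρ)]
    _ = coeff (d * m) (mk g ^ k) * ρ ^ (d * m) := by rw [coeff_rescale, mul_comm]

section LatticeRescale

variable {d : ℕ} {g : ℕ → ℝ} {ρ : ℝ}

theorem tsum_latticeRescale (hd : d ≠ 0) (hg : ∀ n, ¬ d ∣ n → g n = 0) :
    ∑' m, latticeRescale d ρ g m = ∑' n, g n * ρ ^ n :=
  (mul_right_injective₀ hd).tsum_eq (f := fun n => g n * ρ ^ n) fun n hn =>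
    not_not.1 fun hdn => hn (by simp only [hg n fun ⟨m, hm⟩ => hdn ⟨m, hm.symm⟩, zero_mul])

theorem SubexpClass.isSubexponential_latticeRescale (hg : SubexpClass d g ρ) :
    IsSubexponential (latticeRescale d ρ g) := by
  obtain ⟨hd, hρ, hnonneg, hvan, ⟨N, hpos⟩, hsum, -, hratio, hsq⟩ := hg
  replace hd : d ≠ 0 := Nat.one_le_iff_ne_zero.1 hd
  have hρpow : ∀ n, ρ ^ n ≠ 0 := fun n => pow_ne_zero n hρ.ne'
  refine ⟨fun m => mul_nonneg (hnonneg _) (pow_nonneg hρ.le _), ?_, ?_, ?_, ?_⟩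
  · filter_upwards [eventually_ge_atTop N] with m hm
    exact mul_pos (hpos _ (hm.trans (Nat.le_mul_of_pos_left m (Nat.pos_of_ne_zero hd)))
      (dvd_mul_right d m)) (pow_pos hρ _)
  · exact ((mul_right_injective₀ hd).summable_iff fun n hn =>
      by rw [hvan n fun ⟨m, hm⟩ => hn ⟨m, hm.symm⟩, zero_mul]).2 hsum
  · refine (div_self (hρpow d) ▸ hratio.div_const (ρ ^ d)).congr fun m => ?_
    rw [latticeRescale, latticeRescale, mul_add_one, pow_add,
      show g (d * m + d) * (ρ ^ (d * m) * ρ ^ d) = g (d * m + d) * ρ ^ d * ρ ^ (d * m) by ring,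
      mul_div_mul_right _ _ (hρpow _), div_div]
  · rw [tsum_latticeRescale hd hvan]
    refine hsq.congr fun m => ?_
    rw [coeff_mk_pow_latticeRescale hd hvan, latticeRescale,
      mul_div_mul_right _ _ (hρpow _), coeff_mk_sq]

end LatticeRescale

/-- If `g ∈ 𝒮_d` with radius of convergence `ρ`, then for every `ε > 0` there are a constant
`c(ε) > 0` and an integer `n₀ > 0` such that for all `n ≥ n₀` divisible by `d` and all `k ≥ 0`,
`[z^n] g(z)^k ≤ c(ε) (g(ρ) + ε)^k [z^n] g(z)`. -/
theorem subexp_pow_coeff_bound (d : ℕ) (g : ℕ → ℝ) (ρ : ℝ)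
    (hg : SubexpClass d g ρ) (ε : ℝ) (hε : 0 < ε) :
    ∃ c : ℝ, 0 < c ∧ ∃ n₀ : ℕ, 0 < n₀ ∧ ∀ n : ℕ, n₀ ≤ n → d ∣ n → ∀ k : ℕ,
      PowerSeries.coeff (R := ℝ) n ((PowerSeries.mk g) ^ k)
        ≤ c * ((∑' n, g n * ρ ^ n) + ε) ^ k * g n := by
  obtain ⟨c, hc, m₀, hm₀⟩ :=
    coeff_mk_pow_le_of_isSubexponential hg.isSubexponential_latticeRescale hε
  obtain ⟨hd, hρ, -, hvan, -⟩ := hg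
  replace hd : 0 < d := hd
  refine ⟨c, hc, d * (m₀ + 1), Nat.mul_pos hd m₀.succ_pos, ?_⟩
  rintro _ hn ⟨m, rfl⟩ k
  have hm : m₀ ≤ m := by have := Nat.le_of_mul_le_mul_left hn hd; omega
  have hbound := hm₀ m hm k
  rw [coeff_mk_pow_latticeRescale hd.ne' hvan, tsum_latticeRescale hd.ne' hvan, latticeRescale,
    ← mul_assoc] at hbound
  exact le_of_mul_le_mul_right hbound (pow_pos hρ _)
end

section
/- Let d ≥ 1 be an integer and let g(z) belong to the class S_d with radius of convergence ρ. Let f(z) be a non-constant power series with non-negative real coefficients whose radius of convergence is strictly larger than g(ρ). Then the composition f(g(z)) belongs to the class S_d, and [z^n] f(g(z)) ~ f'(g(ρ))·[z^n] g(z) as n → ∞ along multiples of d. -/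
open Filter Finset Topology

lemma sum_range_mul_sub_eq_add (x y : ℕ → ℝ) {m n : ℕ} (h : m ≤ n) :
    ∑ i ∈ range (n + 1), x i * y (n - i)
      = ∑ i ∈ range (n - m), x i * y (n - i) + ∑ j ∈ range (m + 1), x (n - j) * y j := by
  have hrefl : ∑ j ∈ range (m + 1), x (n - j) * y j
      = ∑ i ∈ Ico (n - m) (n + 1), x i * y (n - i) := by
    have h := sum_Ico_reflect (fun i => x i * y (n - i)) 0 (by omega : m + 1 ≤ n + 1)
    rw [show n + 1 - (m + 1) = n - m by omega, Nat.sub_zero, Nat.Ico_zero_eq_range] at h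
    rw [← h]
    exact sum_congr rfl fun j hj => by rw [Nat.sub_sub_self (by simp at hj; omega)]
  rw [hrefl, sum_range_add_sum_Ico _ (by omega)]

lemma sum_range_mul_sub_eq_add_add (x y : ℕ → ℝ) {m n : ℕ} (h : 2 * m + 1 ≤ n) :
    ∑ i ∈ range (n + 1), x i * y (n - i)
      = ∑ i ∈ range (m + 1), x i * y (n - i) + ∑ i ∈ Ico (m + 1) (n - m), x i * y (n - i)
        + ∑ j ∈ range (m + 1), x (n - j) * y j := by
  rw [sum_range_mul_sub_eq_add x y (by omega : m ≤ n), sum_range_add_sum_Ico _ (by omega)]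

noncomputable def convPow (b : ℕ → ℝ) (k n : ℕ) : ℝ :=
  PowerSeries.coeff n (PowerSeries.mk b ^ k)

lemma convPow_zero (b : ℕ → ℝ) (n : ℕ) : convPow b 0 n = if n = 0 then 1 else 0 := by
  simp [convPow, PowerSeries.coeff_one]

lemma convPow_add (b : ℕ → ℝ) (k l n : ℕ) :
    convPow b (k + l) n = ∑ i ∈ range (n + 1), convPow b k i * convPow b l (n - i) := by
  rw [convPow, pow_add, PowerSeries.coeff_mul, Nat.sum_antidiagonal_eq_sum_range_succ_mk]
  rfl

lemma convPow_succ (b : ℕ → ℝ) (k n : ℕ) :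
    convPow b (k + 1) n = ∑ i ∈ range (n + 1), b i * convPow b k (n - i) := by
  rw [add_comm, convPow_add]
  simp [convPow]

lemma convPow_nonneg {b : ℕ → ℝ} (hb : ∀ n, 0 ≤ b n) (k n : ℕ) :
    0 ≤ convPow b k n := by
  induction k generalizing n with
  | zero => rw [convPow_zero]; split_ifs <;> norm_num
  | succ k ih => rw [convPow_succ]; exact sum_nonneg fun i _ => mul_nonneg (hb i) (ih _)

lemma convPow_eq_zero_of_pos {b : ℕ → ℝ} {n : ℕ} (hn : 0 < n) : convPow b 0 n = 0 := by
  simp [convPow_zero, hn.ne']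

lemma hasSum_convPow_mul_pow {b : ℕ → ℝ} {τ S : ℝ} (h : HasSum (fun n => b n * τ ^ n) S)
    (k : ℕ) : HasSum (fun n => convPow b k n * τ ^ n) (S ^ k) := by
  induction k with
  | zero =>
    rw [pow_zero]
    convert hasSum_ite_eq 0 (1 : ℝ) using 2 with n
    rw [convPow_zero]
    split_ifs with hn <;> simp [hn]
  | succ k ih =>
    have hprod := hasSum_sum_range_mul_of_summable_norm h.summable.norm ih.summable.norm
    rw [h.tsum_eq, ih.tsum_eq, ← pow_succ'] at hprod
    refine hprod.congr_fun fun n => ?_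
    rw [convPow_succ, sum_mul]
    refine sum_congr rfl fun i hi => ?_
    rw [← pow_mul_pow_sub τ (Nat.le_of_lt_succ (mem_range.mp hi))]
    ring

lemma convPow_mul_pow_le {b : ℕ → ℝ} {τ S : ℝ} (hb : ∀ n, 0 ≤ b n) (hτ : 0 ≤ τ)
    (h : HasSum (fun n => b n * τ ^ n) S) (k n : ℕ) : convPow b k n * τ ^ n ≤ S ^ k :=
  le_hasSum (hasSum_convPow_mul_pow h k) n
    fun j _ => mul_nonneg (convPow_nonneg hb k j) (pow_nonneg hτ j)

lemma convPow_succ_le {b : ℕ → ℝ} {τ : ℝ} (hb : ∀ n, 0 ≤ b n) {k m n : ℕ}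
    (hmn : m ≤ n) {B K : ℝ} (hB : ∀ j, m + 1 ≤ j → convPow b k j ≤ B * b j)
    (hK : ∀ j, convPow b k j ≤ K * (τ ^ j)⁻¹) :
    convPow b (k + 1) n ≤ B * ∑ i ∈ range (n - m), b i * b (n - i)
      + K * ∑ j ∈ range (m + 1), (τ ^ j)⁻¹ * b (n - j) := by
  rw [convPow_succ, sum_range_mul_sub_eq_add _ _ hmn, mul_sum, mul_sum]
  refine add_le_add (sum_le_sum fun i hi => ?_) (sum_le_sum fun j _ => ?_)
  · calc b i * convPow b k (n - i) ≤ b i * (B * b (n - i)) :=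
          mul_le_mul_of_nonneg_left (hB _ (by simp at hi; omega)) (hb i)
      _ = B * (b i * b (n - i)) := by ring
  · calc b (n - j) * convPow b k j ≤ b (n - j) * (K * (τ ^ j)⁻¹) :=
          mul_le_mul_of_nonneg_left (hK j) (hb _)
      _ = K * ((τ ^ j)⁻¹ * b (n - j)) := by ring

lemma hasSum_tsum_convPow_mul_pow {ι : Type*} {b : ℕ → ℝ} {τ S : ℝ}
    (hb : ∀ n, 0 ≤ b n) (hτ : 0 ≤ τ) (hS : HasSum (fun n => b n * τ ^ n) S)
    {w : ι → ℝ} {κ : ι → ℕ} (hw : ∀ i, 0 ≤ w i)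
    (hwS : Summable fun i => w i * S ^ κ i) :
    HasSum (fun n => (∑' i, w i * convPow b (κ i) n) * τ ^ n) (∑' i, w i * S ^ κ i) := by
  set F : ι × ℕ → ℝ := fun p => w p.1 * convPow b (κ p.1) p.2 * τ ^ p.2
  have hF0 : ∀ p, 0 ≤ F p := fun p =>
    mul_nonneg (mul_nonneg (hw _) (convPow_nonneg hb _ _)) (pow_nonneg hτ _)
  have hrow : ∀ i, HasSum (fun n => F (i, n)) (w i * S ^ κ i) := fun i =>
    ((hasSum_convPow_mul_pow hS (κ i)).mul_left (w i)).congr_fun fun n => by simp only [F]; ring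
  have hFsum : Summable F := (summable_prod_of_nonneg fun p => hF0 p).mpr
    ⟨fun i => (hrow i).summable, hwS.congr fun i => (hrow i).tsum_eq.symm⟩
  have htot : ∑' p, F p = ∑' i, w i * S ^ κ i :=
    (hFsum.hasSum.prod_fiberwise hrow).unique hwS.hasSum
  have hswap : HasSum (F ∘ Equiv.prodComm ℕ ι) (∑' p, F p) :=
    (Equiv.prodComm ℕ ι).hasSum_iff.mpr hFsum.hasSum
  have hcol := ((summable_prod_of_nonneg fun p => hF0 _).mp hswap.summable).1
  rw [← htot]
  refine (hswap.prod_fiberwise fun n => (hcol n).hasSum).congr_fun fun n => ?_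
  simp only [Equiv.prodComm_apply, Prod.swap_prod_mk, F, ← tsum_mul_right]

lemma sum_range_tsum_mul_tsum_convPow {b f : ℕ → ℝ}
    (hf : ∀ n, Summable fun k => f k * convPow b k n) (n : ℕ) :
    ∑ i ∈ range (n + 1), (∑' k, f k * convPow b k i) * ∑' k, f k * convPow b k (n - i)
      = ∑' p : ℕ × ℕ, f p.1 * f p.2 * convPow b (p.1 + p.2) n := by
  calc _ = ∑ i ∈ range (n + 1),
        ∑' p : ℕ × ℕ, (f p.1 * convPow b p.1 i) * (f p.2 * convPow b p.2 (n - i)) :=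
        sum_congr rfl fun i _ => tsum_mul_tsum_of_summable_norm (hf i).norm (hf _).norm
    _ = ∑' p : ℕ × ℕ, ∑ i ∈ range (n + 1),
        (f p.1 * convPow b p.1 i) * (f p.2 * convPow b p.2 (n - i)) :=
        (Summable.tsum_finsetSum fun i _ =>
          summable_mul_of_summable_norm (hf i).norm (hf _).norm).symm
    _ = _ := tsum_congr fun p => by
        rw [convPow_add, mul_sum]
        exact sum_congr rfl fun i _ => by ring

lemma tendsto_of_forall_eventually_approx {F : ℕ → ℝ} {G E : ℕ → ℕ → ℝ}
    {T : ℕ → ℝ} {L : ℝ} (hF : ∀ m, ∀ᶠ n in atTop, F n = G m n + E m n)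
    (hG : ∀ m, Tendsto (G m) atTop (𝓝 (T m))) (hT : Tendsto T atTop (𝓝 L))
    (hE : ∀ ε > 0, ∀ᶠ m in atTop, ∀ᶠ n in atTop, |E m n| ≤ ε) :
    Tendsto F atTop (𝓝 L) := by
  refine Metric.tendsto_nhds.mpr fun ε hε => ?_
  obtain ⟨m, hTm, hEm⟩ :=
    ((Metric.tendsto_nhds.mp hT (ε / 3) (by positivity)).and (hE (ε / 3) (by positivity))).exists
  filter_upwards [hF m, hEm, Metric.tendsto_nhds.mp (hG m) (ε / 3) (by positivity)]
    with n hFn hEn hGn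
  rw [Real.dist_eq] at hTm hGn ⊢
  rw [hFn]
  calc |G m n + E m n - L| = |(G m n - T m) + E m n + (T m - L)| := by congr 1; ring
    _ ≤ |G m n - T m| + |E m n| + |T m - L| := abs_add_three _ _ _
    _ < ε := by linarith

lemma tendsto_div_of_tendsto_div {α : Type*} {l : Filter α} {X a b : α → ℝ} {x A : ℝ}
    (hX : Tendsto (fun n => X n / b n) l (𝓝 x)) (ha : Tendsto (fun n => a n / b n) l (𝓝 A))
    (hA : A ≠ 0) (hb : ∀ᶠ n in l, b n ≠ 0) :
    Tendsto (fun n => X n / a n) l (𝓝 (x / A)) :=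
  (hX.div ha hA).congr' <| by
    filter_upwards [hb] with n hn using div_div_div_cancel_right₀ hn _ _

lemma tsum_prod_mul_natCast_mul_pow_sub_one {f : ℕ → ℝ} {x : ℝ}
    (hf : Summable fun k => f k * x ^ k) (hf' : Summable fun k => f k * k * x ^ (k - 1)) :
    ∑' p : ℕ × ℕ, f p.1 * f p.2 * ((p.1 + p.2 : ℕ) : ℝ) * x ^ (p.1 + p.2 - 1)
      = 2 * ((∑' k, f k * x ^ k) * ∑' k, f k * k * x ^ (k - 1)) := by
  have hpt : ∀ p : ℕ × ℕ, f p.1 * f p.2 * ((p.1 + p.2 : ℕ) : ℝ) * x ^ (p.1 + p.2 - 1)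
      = (f p.1 * p.1 * x ^ (p.1 - 1)) * (f p.2 * x ^ p.2)
        + (f p.1 * x ^ p.1) * (f p.2 * p.2 * x ^ (p.2 - 1)) := by
    rintro ⟨_ | k, _ | l⟩
    · simp
    · simp; ring
    · simp; ring
    · simp only [show k + 1 + (l + 1) - 1 = k + l + 1 by omega, Nat.add_sub_cancel, pow_succ,
        pow_add]
      push_cast
      ring
  rw [tsum_congr hpt, (summable_mul_of_summable_norm hf'.norm hf.norm).tsum_add
    (summable_mul_of_summable_norm hf.norm hf'.norm), ← tsum_mul_tsum_of_summable_norm hf'.norm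
    hf.norm, ← tsum_mul_tsum_of_summable_norm hf.norm hf'.norm]
  ring

lemma summable_mul_pow_of_le {f : ℕ → ℝ} (hf : ∀ k, 0 ≤ f k) {x r : ℝ} (hx : 0 ≤ x)
    (hxr : x ≤ r) (hfr : Summable fun k => f k * r ^ k) : Summable fun k => f k * x ^ k :=
  hfr.of_nonneg_of_le (fun k => mul_nonneg (hf k) (pow_nonneg hx k))
    fun k => mul_le_mul_of_nonneg_left (pow_le_pow_left₀ hx hxr k) (hf k)

lemma tsum_mul_natCast_mul_pow_sub_one_pos {f : ℕ → ℝ} {x : ℝ} (hx : 0 < x)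
    (hf : ∀ k, 0 ≤ f k) (hf1 : ∃ k, 1 ≤ k ∧ f k ≠ 0)
    (hf' : Summable fun k => f k * k * x ^ (k - 1)) : 0 < ∑' k, f k * k * x ^ (k - 1) := by
  obtain ⟨k, hk, hfk⟩ := hf1
  refine hf'.tsum_pos (fun j => mul_nonneg (mul_nonneg (hf j) j.cast_nonneg) (pow_nonneg hx.le _))
    k ?_
  have : (1 : ℝ) ≤ k := by exact_mod_cast hk
  have := (hf k).lt_of_ne' hfk
  positivity

lemma tsum_mul_natCast_mul_pow_sub_one {f : ℕ → ℝ} {x : ℝ}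
    (hf' : Summable fun k => f k * k * x ^ (k - 1)) :
    ∑' k, f k * k * x ^ (k - 1) = ∑' k, ((k : ℕ) + 1 : ℝ) * f (k + 1) * x ^ k := by
  rw [hf'.tsum_eq_zero_add]
  simp only [Nat.cast_zero, mul_zero, zero_mul, zero_add, Nat.add_sub_cancel, Nat.cast_add,
    Nat.cast_one]
  exact tsum_congr fun k => by ring

-- The class `S_1` at `τ`, except that `τ` need not be the radius of convergence.
structure IsSubexp (b : ℕ → ℝ) (τ : ℝ) : Prop where
  pos : 0 < τ
  nonneg : ∀ n, 0 ≤ b n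
  eventually_pos : ∀ᶠ n in atTop, 0 < b n
  summable : Summable fun n => b n * τ ^ n
  tendsto_div_succ : Tendsto (fun n => b n / b (n + 1)) atTop (𝓝 τ)
  tendsto_conv_div : Tendsto (fun n => (∑ i ∈ range (n + 1), b i * b (n - i)) / b n) atTop
    (𝓝 (2 * ∑' n, b n * τ ^ n))

namespace IsSubexp

variable {b : ℕ → ℝ} {τ : ℝ}

lemma tsum_pos (hb : IsSubexp b τ) : 0 < ∑' n, b n * τ ^ n := by
  obtain ⟨n, hn⟩ := hb.eventually_pos.exists
  exact hb.summable.tsum_pos (fun i => mul_nonneg (hb.nonneg i) (pow_nonneg hb.pos.le i)) n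
    (mul_pos hn (pow_pos hb.pos n))

lemma tendsto_self_div (hb : IsSubexp b τ) : Tendsto (fun n => b n / b n) atTop (𝓝 1) :=
  tendsto_const_nhds.congr' <| by
    filter_upwards [hb.eventually_pos] with n hn using (div_self hn.ne').symm

lemma tendsto_div_add (hb : IsSubexp b τ) (j : ℕ) :
    Tendsto (fun n => b n / b (n + j)) atTop (𝓝 (τ ^ j)) := by
  induction j with
  | zero =>
    refine tendsto_const_nhds.congr' ?_
    filter_upwards [hb.eventually_pos] with n hn
    rw [pow_zero, add_zero, div_self hn.ne']
  | succ j ih =>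
    refine (ih.mul (hb.tendsto_div_succ.comp (tendsto_add_atTop_nat j))).congr' ?_
    filter_upwards [tendsto_add_atTop_nat j |>.eventually hb.eventually_pos] with n hn
    rw [Function.comp_apply, div_mul_div_cancel₀ hn.ne', add_assoc]

lemma tendsto_sub_div_of_tendsto_div (hb : IsSubexp b τ) {a : ℕ → ℝ} {A : ℝ}
    (ha : Tendsto (fun n => a n / b n) atTop (𝓝 A)) (j : ℕ) :
    Tendsto (fun n => a (n - j) / b n) atTop (𝓝 (A * τ ^ j)) := by
  have hshift := ((ha.mul (hb.tendsto_div_add j)).comp (tendsto_sub_atTop_nat j))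
  refine hshift.congr' ?_
  filter_upwards [eventually_ge_atTop j, tendsto_sub_atTop_nat j |>.eventually hb.eventually_pos]
    with n hjn hn
  rw [Function.comp_apply, div_mul_div_cancel₀ hn.ne', Nat.sub_add_cancel hjn]

lemma tendsto_sum_range_mul_sub_div (hb : IsSubexp b τ) {a : ℕ → ℝ} {A : ℝ}
    (ha : Tendsto (fun n => a n / b n) atTop (𝓝 A)) (c : ℕ → ℝ) (m : ℕ) :
    Tendsto (fun n => (∑ i ∈ range (m + 1), c i * a (n - i)) / b n) atTop
      (𝓝 (A * ∑ i ∈ range (m + 1), c i * τ ^ i)) := by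
  rw [mul_sum]
  simp_rw [sum_div, mul_div_assoc]
  refine tendsto_finsetSum _ fun i _ => ?_
  rw [mul_left_comm]
  exact (hb.tendsto_sub_div_of_tendsto_div ha i).const_mul (c i)

lemma tendsto_sum_range_mul_pow (hb : IsSubexp b τ) :
    Tendsto (fun m => ∑ i ∈ range (m + 1), b i * τ ^ i) atTop (𝓝 (∑' n, b n * τ ^ n)) :=
  hb.summable.hasSum.tendsto_sum_nat.comp (tendsto_add_atTop_nat 1)

lemma tendsto_sum_Ico_div (hb : IsSubexp b τ) (m : ℕ) :
    Tendsto (fun n => (∑ i ∈ Ico (m + 1) (n - m), b i * b (n - i)) / b n) atTop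
      (𝓝 (2 * ∑' n, b n * τ ^ n - 2 * ∑ i ∈ range (m + 1), b i * τ ^ i)) := by
  have hend := hb.tendsto_sum_range_mul_sub_div hb.tendsto_self_div b m
  rw [one_mul] at hend
  refine (hb.tendsto_conv_div.sub (hend.const_mul 2)).congr' ?_
  filter_upwards [eventually_ge_atTop (2 * m + 1)] with n hn
  rw [sum_range_mul_sub_eq_add_add b b hn]
  simp_rw [mul_comm (b (n - _)) (b _)]
  ring

lemma eventually_sum_Ico_le (hb : IsSubexp b τ) {ε : ℝ} (hε : 0 < ε) :
    ∀ᶠ m in atTop, ∀ᶠ n in atTop,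
      ∑ i ∈ Ico (m + 1) (n - m), b i * b (n - i) ≤ ε * b n := by
  have hlim : Tendsto
      (fun m => 2 * ∑' n, b n * τ ^ n - 2 * ∑ i ∈ range (m + 1), b i * τ ^ i)
      atTop (𝓝 0) := by
    simpa using (hb.tendsto_sum_range_mul_pow.const_mul 2).const_sub (2 * ∑' n, b n * τ ^ n)
  filter_upwards [hlim.eventually (gt_mem_nhds hε)] with m hm
  filter_upwards [(hb.tendsto_sum_Ico_div m).eventually (gt_mem_nhds hm), hb.eventually_pos]
    with n hlt hn
  exact ((div_lt_iff₀ hn).mp hlt).le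

lemma eventually_le_mul_of_tendsto_div (hb : IsSubexp b τ) {a : ℕ → ℝ} {A : ℝ}
    (ha : Tendsto (fun n => a n / b n) atTop (𝓝 A)) {C : ℝ} (hC : A < C) :
    ∀ᶠ n in atTop, a n ≤ C * b n := by
  filter_upwards [ha.eventually (gt_mem_nhds hC), hb.eventually_pos] with n hlt hn
  exact ((div_lt_iff₀ hn).mp hlt).le

lemma tendsto_conv_div_of_tendsto_div (hb : IsSubexp b τ) {a : ℕ → ℝ} {A A' : ℝ}
    (ha0 : ∀ n, 0 ≤ a n) (has : HasSum (fun n => a n * τ ^ n) A')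
    (ha : Tendsto (fun n => a n / b n) atTop (𝓝 A)) :
    Tendsto (fun n => (∑ i ∈ range (n + 1), b i * a (n - i)) / b n) atTop
      (𝓝 (A * ∑' n, b n * τ ^ n + A')) := by
  have hA : 0 ≤ A := ge_of_tendsto ha <| by
    filter_upwards [hb.eventually_pos] with n hn using div_nonneg (ha0 n) hn.le
  obtain ⟨N, hN⟩ := eventually_atTop.mp (hb.eventually_le_mul_of_tendsto_div ha (lt_add_one A))
  refine tendsto_of_forall_eventually_approx
    (G := fun m n => (∑ i ∈ range (m + 1), b i * a (n - i)
      + ∑ j ∈ range (m + 1), a j * b (n - j)) / b n)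
    (E := fun m n => (∑ i ∈ Ico (m + 1) (n - m), b i * a (n - i)) / b n)
    (T := fun m =>
      A * ∑ i ∈ range (m + 1), b i * τ ^ i + ∑ i ∈ range (m + 1), a i * τ ^ i)
    (fun m => ?_) (fun m => ?_) ?_ (fun ε hε => ?_)
  · filter_upwards [eventually_ge_atTop (2 * m + 1)] with n hn
    rw [sum_range_mul_sub_eq_add_add b a hn, ← add_div]
    simp_rw [mul_comm (b (n - _)) (a _)]
    ring_nf
  · refine ((hb.tendsto_sum_range_mul_sub_div ha b m).add ?_).congr fun n => (add_div _ _ _).symm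
    simpa using hb.tendsto_sum_range_mul_sub_div hb.tendsto_self_div a m
  · exact (hb.tendsto_sum_range_mul_pow.const_mul A).add
      (has.tendsto_sum_nat.comp (tendsto_add_atTop_nat 1))
  · filter_upwards [hb.eventually_sum_Ico_le (div_pos hε (by linarith : 0 < A + 1)),
      eventually_ge_atTop N] with m hm hNm
    filter_upwards [hm, hb.eventually_pos] with n hmid hn
    have hle : ∑ i ∈ Ico (m + 1) (n - m), b i * a (n - i)
        ≤ (A + 1) * ∑ i ∈ Ico (m + 1) (n - m), b i * b (n - i) := by
      rw [mul_sum]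
      refine sum_le_sum fun i hi => ?_
      have hi' := mem_Ico.mp hi
      calc b i * a (n - i) ≤ b i * ((A + 1) * b (n - i)) :=
            mul_le_mul_of_nonneg_left (hN _ (by omega)) (hb.nonneg i)
        _ = (A + 1) * (b i * b (n - i)) := by ring
    rw [abs_of_nonneg (div_nonneg (sum_nonneg fun i _ => mul_nonneg (hb.nonneg i) (ha0 _)) hn.le),
      div_le_iff₀ hn]
    calc _ ≤ (A + 1) * (ε / (A + 1) * b n) := hle.trans (by gcongr)
      _ = ε * b n := by field_simp

lemma tendsto_convPow_div (hb : IsSubexp b τ) (k : ℕ) :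
    Tendsto (fun n => convPow b k n / b n) atTop
      (𝓝 ((k : ℝ) * (∑' n, b n * τ ^ n) ^ (k - 1))) := by
  induction k with
  | zero =>
    refine tendsto_const_nhds.congr' ?_
    filter_upwards [eventually_gt_atTop 0] with n hn
    simp [convPow_eq_zero_of_pos hn]
  | succ k ih =>
    have h := hb.tendsto_conv_div_of_tendsto_div (convPow_nonneg hb.nonneg k)
      (hasSum_convPow_mul_pow hb.summable.hasSum k) ih
    simp_rw [← convPow_succ] at h
    convert h using 2
    rcases k with _ | k
    · simp
    · push_cast
      simp only [pow_succ]
      ring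

lemma convPow_le_pow_div (hb : IsSubexp b τ) (k j : ℕ) :
    convPow b k j ≤ (∑' n, b n * τ ^ n) ^ k * (τ ^ j)⁻¹ := by
  rw [← div_eq_mul_inv, le_div_iff₀ (pow_pos hb.pos j)]
  exact convPow_mul_pow_le hb.nonneg hb.pos.le hb.summable.hasSum k j

lemma convPow_le_inv_mul (hb : IsSubexp b τ) {n : ℕ} (hbn : 0 < b n) (k : ℕ) :
    convPow b k n ≤ (∑' n, b n * τ ^ n) ^ k * (τ ^ n * b n)⁻¹ * b n := by
  rw [mul_inv, mul_assoc, mul_assoc, inv_mul_cancel₀ hbn.ne', mul_one]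
  exact hb.convPow_le_pow_div k n

lemma exists_kesten_bounds (hb : IsSubexp b τ) {ε : ℝ} (hε : 0 < ε) :
    ∃ m : ℕ, (∀ n, m + 1 ≤ n → 0 < b n) ∧ ∀ᶠ n in atTop,
      ∑ i ∈ range (n - m), b i * b (n - i) ≤ (1 + ε) * (∑' n, b n * τ ^ n) * b n ∧
      ∑ j ∈ range (m + 1), (τ ^ j)⁻¹ * b (n - j) ≤ (m + 2) * b n := by
  set S := ∑' n, b n * τ ^ n
  have hεS : 0 < ε * S := mul_pos hε hb.tsum_pos
  obtain ⟨N, hN⟩ := eventually_atTop.mp hb.eventually_pos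
  obtain ⟨m, hmid, hNm⟩ :=
    ((hb.eventually_sum_Ico_le (by positivity : 0 < ε * S / 2)).and (eventually_ge_atTop N)).exists
  refine ⟨m, fun n hn => hN n (by omega), ?_⟩
  have hhead := hb.tendsto_sum_range_mul_sub_div hb.tendsto_self_div b m
  have hPS : ∑ i ∈ range (m + 1), b i * τ ^ i ≤ S :=
    hb.summable.sum_le_tsum _ fun i _ => mul_nonneg (hb.nonneg i) (pow_nonneg hb.pos.le i)
  have hinv := hb.tendsto_sum_range_mul_sub_div hb.tendsto_self_div (fun j => (τ ^ j)⁻¹) m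
  have hinv_lim : 1 * ∑ j ∈ range (m + 1), (τ ^ j)⁻¹ * τ ^ j = m + 1 := by
    simp [inv_mul_cancel₀ (pow_pos hb.pos _).ne']
  rw [hinv_lim] at hinv
  filter_upwards [hmid, eventually_ge_atTop (2 * m + 1),
    hb.eventually_le_mul_of_tendsto_div hhead (by linarith : 1 * _ < S + ε * S / 2),
    hb.eventually_le_mul_of_tendsto_div hinv (by linarith : (m : ℝ) + 1 < m + 2)]
    with n hmidn hn hheadn hinvn
  refine ⟨?_, hinvn⟩
  rw [← sum_range_add_sum_Ico _ (by omega : m + 1 ≤ n - m)]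
  linarith

lemma convPow_le_of_kesten_bounds (hb : IsSubexp b τ) {ε X : ℝ} (hε : 0 ≤ ε) {m N : ℕ}
    (hpos : ∀ n, m + 1 ≤ n → 0 < b n)
    (hN : ∀ n, N ≤ n →
      ∑ i ∈ range (n - m), b i * b (n - i) ≤ (1 + ε / 2) * (∑' n, b n * τ ^ n) * b n ∧
      ∑ j ∈ range (m + 1), (τ ^ j)⁻¹ * b (n - j) ≤ (m + 2) * b n)
    (hXW : ∑ u ∈ Ico (m + 1) N, (τ ^ u * b u)⁻¹ ≤ X)
    (hXm : (m + 2 : ℝ) ≤ X * (ε * (∑' n, b n * τ ^ n) / 2)) (k : ℕ) {n : ℕ}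
    (hn : m + 1 ≤ n) :
    convPow b k n ≤ X * ((1 + ε) * ∑' n, b n * τ ^ n) ^ k * b n := by
  set S := ∑' n, b n * τ ^ n
  have hS : 0 < S := hb.tsum_pos
  have hX0 : 0 ≤ X := (sum_nonneg fun u hu => inv_nonneg.mpr (mul_nonneg
    (pow_nonneg hb.pos.le u) (hpos u (mem_Ico.mp hu).1).le)).trans hXW
  have hpow : ∀ k, S ^ k ≤ ((1 + ε) * S) ^ k := fun k =>
    pow_le_pow_left₀ hS.le (by nlinarith) k
  induction k generalizing n with
  | zero =>
    rw [convPow_eq_zero_of_pos (by omega)]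
    exact mul_nonneg (by positivity) (hb.nonneg n)
  | succ k ih =>
    rcases lt_or_ge n N with hnN | hnN
    · -- On the finite window `m < n < N` the crude bound `convPow b k n ≤ S ^ k / τ ^ n`
      -- suffices.
      have hbn := hpos n hn
      have hW : (τ ^ n * b n)⁻¹ ≤ X :=
        (single_le_sum (f := fun u => (τ ^ u * b u)⁻¹)
          (fun u hu => inv_nonneg.mpr (mul_nonneg (pow_nonneg hb.pos.le u)
            (hpos u (mem_Ico.mp hu).1).le)) (mem_Ico.mpr ⟨hn, hnN⟩)).trans hXW
      calc convPow b (k + 1) n ≤ S ^ (k + 1) * (τ ^ n * b n)⁻¹ * b n :=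
            hb.convPow_le_inv_mul hbn (k + 1)
        _ ≤ ((1 + ε) * S) ^ (k + 1) * X * b n := mul_le_mul_of_nonneg_right
            (mul_le_mul (hpow _) hW (inv_pos.mpr (mul_pos (pow_pos hb.pos n) hbn)).le
              (by positivity)) hbn.le
        _ = X * ((1 + ε) * S) ^ (k + 1) * b n := by ring
    obtain ⟨hhead, htail⟩ := hN n hnN
    have hslack := mul_le_mul_of_nonneg_right
      (mul_le_mul (hpow k) hXm (by positivity) (by positivity)) (hb.nonneg n)
    calc convPow b (k + 1) n
        ≤ X * ((1 + ε) * S) ^ k * ∑ i ∈ range (n - m), b i * b (n - i)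
          + S ^ k * ∑ j ∈ range (m + 1), (τ ^ j)⁻¹ * b (n - j) :=
          convPow_succ_le hb.nonneg (by omega) (fun j hj => ih hj) (hb.convPow_le_pow_div k)
      _ ≤ X * ((1 + ε) * S) ^ k * ((1 + ε / 2) * S * b n) + S ^ k * ((m + 2) * b n) := by
          gcongr
      _ ≤ X * ((1 + ε) * S) ^ (k + 1) * b n := by
          rw [pow_succ]
          linarith

lemma exists_convPow_le (hb : IsSubexp b τ) {ε : ℝ} (hε : 0 < ε) :
    ∃ C, 0 ≤ C ∧ ∀ᶠ n in atTop, ∀ k,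
      convPow b k n ≤ C * ((1 + ε) * ∑' n, b n * τ ^ n) ^ k * b n := by
  set S := ∑' n, b n * τ ^ n
  have hS : 0 < S := hb.tsum_pos
  obtain ⟨m, hpos, hev⟩ := hb.exists_kesten_bounds (half_pos hε)
  obtain ⟨N, hN⟩ := eventually_atTop.mp hev
  set X := max (∑ u ∈ Ico (m + 1) N, (τ ^ u * b u)⁻¹) (2 * (m + 2) / (ε * S))
  have hXm : (m + 2 : ℝ) ≤ X * (ε * S / 2) :=
    calc (m + 2 : ℝ) = 2 * (m + 2) / (ε * S) * (ε * S / 2) := by field_simp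
      _ ≤ X * (ε * S / 2) := by gcongr; exact le_max_right _ _
  refine ⟨X, le_max_of_le_right (by positivity), ?_⟩
  filter_upwards [eventually_ge_atTop (m + 1)] with n hn k
  exact hb.convPow_le_of_kesten_bounds hε.le hpos hN (le_max_left _ _) hXm k hn

lemma tendsto_tsum_convPow_div (hb : IsSubexp b τ) {ι : Type*} {w : ι → ℝ} {κ : ι → ℕ}
    {r : ℝ} (hw : ∀ i, 0 ≤ w i) (hr : ∑' n, b n * τ ^ n < r)
    (hsum : Summable fun i => w i * r ^ κ i) :
    Summable (fun i => w i * κ i * (∑' n, b n * τ ^ n) ^ (κ i - 1)) ∧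
      Tendsto (fun n => (∑' i, w i * convPow b (κ i) n) / b n) atTop
        (𝓝 (∑' i, w i * κ i * (∑' n, b n * τ ^ n) ^ (κ i - 1))) := by
  set S := ∑' n, b n * τ ^ n
  have hS : 0 < S := hb.tsum_pos
  obtain ⟨ε, hε, hεr⟩ : ∃ ε > 0, (1 + ε) * S < r :=
    ⟨(r - S) / (2 * S), div_pos (by linarith) (by positivity), by field_simp; linarith⟩
  obtain ⟨C, hC, hK⟩ := hb.exists_convPow_le hε
  have hdom : ∀ᶠ n in atTop, ∀ i,
      ‖w i * convPow b (κ i) n / b n‖ ≤ C * (w i * r ^ κ i) := by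
    filter_upwards [hK, hb.eventually_pos] with n hKn hn i
    rw [Real.norm_of_nonneg (div_nonneg (mul_nonneg (hw i) (convPow_nonneg hb.nonneg _ _)) hn.le),
      div_le_iff₀ hn]
    calc w i * convPow b (κ i) n ≤ w i * (C * ((1 + ε) * S) ^ κ i * b n) :=
          mul_le_mul_of_nonneg_left (hKn _) (hw i)
      _ ≤ w i * (C * r ^ κ i * b n) := by gcongr; exact hw i
      _ = C * (w i * r ^ κ i) * b n := by ring
  have hpt : ∀ i, Tendsto (fun n => w i * convPow b (κ i) n / b n) atTop
      (𝓝 (w i * κ i * S ^ (κ i - 1))) := fun i => by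
    simpa only [mul_div_assoc, mul_assoc] using (hb.tendsto_convPow_div (κ i)).const_mul (w i)
  refine ⟨(hsum.mul_left C).of_norm_bounded fun i =>
    le_of_tendsto (tendsto_norm.comp (hpt i)) (hdom.mono fun n h => h i), ?_⟩
  exact (tendsto_tsum_of_dominated_convergence (hsum.mul_left C) hpt hdom).congr fun n =>
    tsum_div_const

lemma summable_mul_convPow (hb : IsSubexp b τ) {f : ℕ → ℝ} (hf : ∀ k, 0 ≤ f k) {r : ℝ}
    (hr : ∑' n, b n * τ ^ n ≤ r) (hfr : Summable fun k => f k * r ^ k) (n : ℕ) :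
    Summable fun k => f k * convPow b k n :=
  (hfr.mul_right (τ ^ n)⁻¹).of_nonneg_of_le
    (fun k => mul_nonneg (hf k) (convPow_nonneg hb.nonneg k n))
    fun k => by
      rw [mul_assoc]
      refine mul_le_mul_of_nonneg_left ((hb.convPow_le_pow_div k n).trans ?_) (hf k)
      exact mul_le_mul_of_nonneg_right (pow_le_pow_left₀ hb.tsum_pos.le hr k)
        (inv_nonneg.mpr (pow_nonneg hb.pos.le n))

lemma eventually_pos_of_tendsto_div (hb : IsSubexp b τ) {a : ℕ → ℝ} {A : ℝ}
    (ha : Tendsto (fun n => a n / b n) atTop (𝓝 A)) (hA : 0 < A) :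
    ∀ᶠ n in atTop, 0 < a n := by
  filter_upwards [ha.eventually (lt_mem_nhds hA), hb.eventually_pos] with n hlt hn
  exact (div_pos_iff_of_pos_right hn).mp hlt

lemma tendsto_div_succ_of_tendsto_div (hb : IsSubexp b τ) {a : ℕ → ℝ} {A : ℝ}
    (ha : Tendsto (fun n => a n / b n) atTop (𝓝 A)) (hA : A ≠ 0) :
    Tendsto (fun n => a n / a (n + 1)) atTop (𝓝 τ) := by
  have hbne : ∀ᶠ n in atTop, b n ≠ 0 := hb.eventually_pos.mono fun n hn => hn.ne'
  have hshift : Tendsto (fun n => a n / b (n + 1)) atTop (𝓝 (A * τ)) :=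
    (ha.mul hb.tendsto_div_succ).congr' <| by
      filter_upwards [hbne] with n hn using div_mul_div_cancel₀ hn
  simpa [mul_div_cancel_left₀ τ hA] using tendsto_div_of_tendsto_div hshift
    (ha.comp (tendsto_add_atTop_nat 1)) hA (tendsto_add_atTop_nat 1 |>.eventually hbne)

lemma tendsto_conv_tsum_convPow_div (hb : IsSubexp b τ) {f : ℕ → ℝ} (hf : ∀ k, 0 ≤ f k)
    (hf1 : ∃ k, 1 ≤ k ∧ f k ≠ 0) {r : ℝ} (hr : ∑' n, b n * τ ^ n < r)
    (hfr : Summable fun k => f k * r ^ k) :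
    Tendsto (fun n => (∑ i ∈ range (n + 1),
        (∑' k, f k * convPow b k i) * ∑' k, f k * convPow b k (n - i))
        / ∑' k, f k * convPow b k n) atTop
      (𝓝 (2 * ∑' k, f k * (∑' n, b n * τ ^ n) ^ k)) := by
  set S := ∑' n, b n * τ ^ n with hSdef
  have hS : 0 < S := hb.tsum_pos
  obtain ⟨hL', hmain⟩ := hb.tendsto_tsum_convPow_div (κ := fun k => k) hf hr hfr
  rw [← hSdef] at hL' hmain
  have hL := tsum_mul_natCast_mul_pow_sub_one_pos hS hf hf1 hL'
  have hfr0 : ∀ k, 0 ≤ f k * r ^ k := fun k =>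
    mul_nonneg (hf k) (pow_nonneg (hS.le.trans hr.le) k)
  have hpair : Summable fun p : ℕ × ℕ => f p.1 * f p.2 * r ^ (p.1 + p.2) :=
    (hfr.mul_of_nonneg hfr hfr0 hfr0).congr fun p => by rw [pow_add]; ring
  have hconv := (hb.tendsto_tsum_convPow_div (w := fun p : ℕ × ℕ => f p.1 * f p.2)
    (κ := fun p => p.1 + p.2) (fun p => mul_nonneg (hf _) (hf _)) hr hpair).2
  rw [tsum_prod_mul_natCast_mul_pow_sub_one (summable_mul_pow_of_le hf hS.le hr.le hfr) hL']
    at hconv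
  convert tendsto_div_of_tendsto_div hconv hmain hL.ne'
    (hb.eventually_pos.mono fun n hn => hn.ne') using 1
  · funext n
    rw [sum_range_tsum_mul_tsum_convPow (hb.summable_mul_convPow hf hr.le hfr)]
  · field_simp

theorem comp (hb : IsSubexp b τ) {f : ℕ → ℝ} (hf : ∀ k, 0 ≤ f k)
    (hf1 : ∃ k, 1 ≤ k ∧ f k ≠ 0) {r : ℝ} (hr : ∑' n, b n * τ ^ n < r)
    (hfr : Summable fun k => f k * r ^ k) :
    IsSubexp (fun n => ∑' k, f k * convPow b k n) τ ∧
      0 < ∑' k, ((k : ℕ) + 1 : ℝ) * f (k + 1) * (∑' n, b n * τ ^ n) ^ k ∧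
      Tendsto (fun n => (∑' k, f k * convPow b k n) / b n) atTop
        (𝓝 (∑' k, ((k : ℕ) + 1 : ℝ) * f (k + 1) * (∑' n, b n * τ ^ n) ^ k)) := by
  have hS := hb.tsum_pos
  obtain ⟨hL', hmain⟩ := hb.tendsto_tsum_convPow_div (κ := fun k => k) hf hr hfr
  have hL := tsum_mul_natCast_mul_pow_sub_one_pos hS hf hf1 hL'
  have hsum := hasSum_tsum_convPow_mul_pow hb.nonneg hb.pos.le hb.summable.hasSum hf
    (summable_mul_pow_of_le hf hS.le hr.le hfr)
  rw [← tsum_mul_natCast_mul_pow_sub_one hL']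
  refine ⟨⟨hb.pos,
    fun n => tsum_nonneg fun k => mul_nonneg (hf k) (convPow_nonneg hb.nonneg k n),
    hb.eventually_pos_of_tendsto_div hmain hL, hsum.summable,
    hb.tendsto_div_succ_of_tendsto_div hmain hL.ne', ?_⟩, hL, hmain⟩
  rw [hsum.tsum_eq]
  exact hb.tendsto_conv_tsum_convPow_div hf hf1 hr hfr

end IsSubexp

section Dilation

variable {d : ℕ}

lemma sum_range_mul_eq_sum_range (hd : 0 < d) {F : ℕ → ℝ} (hF : ∀ i, ¬ d ∣ i → F i = 0)
    (m : ℕ) : ∑ i ∈ range (d * m + 1), F i = ∑ u ∈ range (m + 1), F (d * u) := by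
  have hsub : (range (m + 1)).image (d * ·) ⊆ range (d * m + 1) := by
    intro i hi
    obtain ⟨u, hu, rfl⟩ := mem_image.mp hi
    exact mem_range.mpr
      (Nat.lt_succ_of_le (Nat.mul_le_mul_left d (Nat.le_of_lt_succ (mem_range.mp hu))))
  rw [← sum_subset hsub, sum_image fun u _ v _ h => Nat.eq_of_mul_eq_mul_left hd h]
  rintro i hi hni
  refine hF i fun ⟨u, hu⟩ => hni (mem_image.mpr ⟨u, mem_range.mpr ?_, hu.symm⟩)
  subst hu
  exact Nat.lt_succ_of_le (Nat.le_of_mul_le_mul_left (Nat.le_of_lt_succ (mem_range.mp hi)) hd)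

lemma convPow_eq_zero_of_not_dvd {b : ℕ → ℝ} (hb : ∀ i, ¬ d ∣ i → b i = 0) (k : ℕ)
    {n : ℕ} (hn : ¬ d ∣ n) : convPow b k n = 0 := by
  induction k generalizing n with
  | zero => exact convPow_eq_zero_of_pos (Nat.pos_of_ne_zero fun h => hn (h ▸ dvd_zero d))
  | succ k ih =>
    rw [convPow_succ]
    refine sum_eq_zero fun i hi => ?_
    by_cases hdi : d ∣ i
    · rw [ih fun h => hn ?_, mul_zero]
      simpa [Nat.add_sub_cancel' (Nat.le_of_lt_succ (mem_range.mp hi))] using hdi.add h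
    · rw [hb i hdi, zero_mul]

lemma convPow_comp_mul (hd : 0 < d) {g : ℕ → ℝ} (hg : ∀ i, ¬ d ∣ i → g i = 0)
    (k m : ℕ) : convPow g k (d * m) = convPow (fun u => g (d * u)) k m := by
  induction k generalizing m with
  | zero => simp [convPow_zero, hd.ne']
  | succ k ih =>
    rw [convPow_succ, convPow_succ, sum_range_mul_eq_sum_range hd]
    · exact sum_congr rfl fun u _ => by rw [← Nat.mul_sub, ih]
    · intro i hi
      rw [hg i hi, zero_mul]

lemma hasSum_comp_mul_iff (hd : 0 < d) {F : ℕ → ℝ} (hF : ∀ i, ¬ d ∣ i → F i = 0)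
    {a : ℝ} : HasSum (fun m => F (d * m)) a ↔ HasSum F a :=
  (mul_right_injective₀ hd.ne').hasSum_iff fun i hi => hF i fun ⟨m, hm⟩ => hi ⟨m, hm.symm⟩

lemma hasSum_comp_mul_mul_pow_iff (hd : 0 < d) {g : ℕ → ℝ}
    (hg : ∀ i, ¬ d ∣ i → g i = 0) {x a : ℝ} :
    HasSum (fun m => g (d * m) * (x ^ d) ^ m) a ↔ HasSum (fun n => g n * x ^ n) a := by
  simp_rw [← pow_mul]
  exact hasSum_comp_mul_iff (F := fun n => g n * x ^ n) hd fun i hi => by rw [hg i hi, zero_mul]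

lemma summable_comp_mul_mul_pow_iff (hd : 0 < d) {g : ℕ → ℝ}
    (hg : ∀ i, ¬ d ∣ i → g i = 0) {x : ℝ} :
    Summable (fun m => g (d * m) * (x ^ d) ^ m) ↔ Summable (fun n => g n * x ^ n) :=
  ⟨fun h => ((hasSum_comp_mul_mul_pow_iff hd hg).mp h.hasSum).summable,
    fun h => ((hasSum_comp_mul_mul_pow_iff hd hg).mpr h.hasSum).summable⟩

lemma tsum_comp_mul_mul_pow (hd : 0 < d) {g : ℕ → ℝ} (hg : ∀ i, ¬ d ∣ i → g i = 0)
    (x : ℝ) : ∑' m, g (d * m) * (x ^ d) ^ m = ∑' n, g n * x ^ n := by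
  simp_rw [← pow_mul]
  refine (mul_right_injective₀ hd.ne').tsum_eq (f := fun n => g n * x ^ n) fun n hn => ?_
  by_contra hnd
  exact hn (show g n * x ^ n = 0 by rw [hg n fun ⟨m, hm⟩ => hnd ⟨m, hm.symm⟩, zero_mul])

lemma sum_range_mul_sub_comp_mul (hd : 0 < d) {g : ℕ → ℝ} (hg : ∀ i, ¬ d ∣ i → g i = 0)
    (m : ℕ) :
    ∑ i ∈ range (d * m + 1), g i * g (d * m - i)
      = ∑ u ∈ range (m + 1), g (d * u) * g (d * (m - u)) := by
  rw [sum_range_mul_eq_sum_range hd fun i hi => by rw [hg i hi, zero_mul]]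
  exact sum_congr rfl fun u _ => by rw [Nat.mul_sub]

lemma not_summable_of_eventually_le (hd : 0 < d) {g H : ℕ → ℝ} (hg0 : ∀ n, 0 ≤ g n)
    (hg : ∀ i, ¬ d ∣ i → g i = 0) {C : ℝ}
    (hle : ∀ᶠ m in atTop, g (d * m) ≤ C * H (d * m))
    {r : ℝ} (hr : 0 ≤ r) (hgr : ¬ Summable fun n => g n * r ^ n) :
    ¬ Summable fun n => H n * r ^ n := by
  intro hH
  refine hgr ((summable_comp_mul_mul_pow_iff hd hg).mp ?_)
  refine ((hH.comp_injective (mul_right_injective₀ hd.ne')).mul_left C)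
    |>.of_norm_bounded_eventually_nat ?_
  filter_upwards [hle] with m hm
  rw [Real.norm_of_nonneg (mul_nonneg (hg0 _) (pow_nonneg (pow_nonneg hr d) m)), ← pow_mul,
    Function.comp_apply, ← mul_assoc]
  exact mul_le_mul_of_nonneg_right hm (pow_nonneg hr _)

namespace SubexpClass

variable {g : ℕ → ℝ} {ρ : ℝ}

lemma isSubexp (hg : SubexpClass d g ρ) : IsSubexp (fun m => g (d * m)) (ρ ^ d) := by
  obtain ⟨hd, hρ, hg0, hgv, ⟨N, hN⟩, hsum, -, hratio, hconv⟩ := hg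
  refine ⟨pow_pos hρ d, fun m => hg0 _, ?_, (summable_comp_mul_mul_pow_iff hd hgv).mpr hsum,
    ?_, ?_⟩
  · filter_upwards [eventually_ge_atTop N] with m hm
    exact hN _ (hm.trans (Nat.le_mul_of_pos_left m hd)) (dvd_mul_right d m)
  · simpa only [Nat.mul_succ] using hratio
  · rw [tsum_comp_mul_mul_pow hd hgv]
    simpa only [sum_range_mul_sub_comp_mul hd hgv] using hconv

lemma of_isSubexp (hd : 1 ≤ d) (hρ : 0 < ρ) (hg0 : ∀ n, 0 ≤ g n)
    (hgv : ∀ n, ¬ d ∣ n → g n = 0)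
    (hg : IsSubexp (fun m => g (d * m)) (ρ ^ d))
    (hrad : ∀ r : ℝ, ρ < r → ¬ Summable fun n => g n * r ^ n) : SubexpClass d g ρ := by
  obtain ⟨N, hN⟩ := eventually_atTop.mp hg.eventually_pos
  refine ⟨hd, hρ, hg0, hgv, ⟨d * N, ?_⟩,
    (summable_comp_mul_mul_pow_iff hd hgv).mp hg.summable, hrad, ?_, ?_⟩
  · rintro n hn ⟨m, rfl⟩
    exact hN m (Nat.le_of_mul_le_mul_left hn hd)
  · simpa only [Nat.mul_succ] using hg.tendsto_div_succ
  · rw [← tsum_comp_mul_mul_pow hd hgv]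
    simpa only [sum_range_mul_sub_comp_mul hd hgv] using hg.tendsto_conv_div

end SubexpClass

end Dilation

/-- If `g ∈ 𝒮_d` with radius of convergence `ρ`, and `f` is a non-constant power series with
non-negative coefficients whose radius of convergence exceeds `g(ρ)`, then the composition
`f(g(z))` (whose `n`-th coefficient is `∑_k f_k [z^n] g(z)^k`) belongs to `𝒮_d`, and
`[z^n] f(g(z)) ∼ f'(g(ρ)) · [z^n] g(z)` along multiples of `d`. -/
theorem subexp_composition (d : ℕ) (g f : ℕ → ℝ) (ρ : ℝ)
    (hg : SubexpClass d g ρ)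
    (hf0 : ∀ k, 0 ≤ f k)
    (hfnonconst : ∃ k, 1 ≤ k ∧ f k ≠ 0)
    (hfrad : ∃ r : ℝ, (∑' n, g n * ρ ^ n) < r ∧ Summable (fun k => f k * r ^ k)) :
    SubexpClass d (fun n => ∑' k, f k * PowerSeries.coeff n ((PowerSeries.mk g) ^ k)) ρ ∧
    Filter.Tendsto
      (fun m => (∑' k, f k * PowerSeries.coeff (d * m) ((PowerSeries.mk g) ^ k)) / g (d * m))
      Filter.atTop
      (nhds (∑' k, ((k : ℕ) + 1 : ℝ) * f (k + 1) * (∑' n, g n * ρ ^ n) ^ k)) := by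
  obtain ⟨hd, hρ, hg0, hgv, -, -, hgrad, -, -⟩ := id hg
  obtain ⟨r, hr, hfr⟩ := hfrad
  have hb := hg.isSubexp
  rw [← tsum_comp_mul_mul_pow hd hgv] at hr ⊢
  obtain ⟨hh, hL, hlim⟩ := hb.comp hf0 hfnonconst hr hfr
  have hdil : ∀ m, ∑' k, f k * convPow g k (d * m)
      = ∑' k, f k * convPow (fun u => g (d * u)) k m := fun m => by
    simp_rw [convPow_comp_mul hd hgv]
  have hbh := hh.eventually_le_mul_of_tendsto_div (tendsto_div_of_tendsto_div hb.tendsto_self_div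
    hlim hL.ne' (hb.eventually_pos.mono fun m hm => hm.ne')) (lt_add_one _)
  simp_rw [← hdil] at hh hbh
  show SubexpClass d (fun n => ∑' k, f k * convPow g k n) ρ ∧
    Tendsto (fun m => (∑' k, f k * convPow g k (d * m)) / g (d * m)) atTop _
  simp_rw [hdil]
  exact ⟨SubexpClass.of_isSubexp hd hρ
    (fun n => tsum_nonneg fun k => mul_nonneg (hf0 k) (convPow_nonneg hg0 k n))
    (fun n hn => by simp [convPow_eq_zero_of_not_dvd hgv _ hn]) hh
    fun r' hr' => not_summable_of_eventually_le hd hg0 hgv hbh (hρ.trans hr').le (hgrad r' hr'),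
    hlim⟩
end

section
/- Let f(z) belong to the class S_1 with radius of convergence ρ, and let g₁(z), g₂(z) be power series with non-negative real coefficients. Suppose [z^n] g₁(z) / [z^n] f(z) → c₁ and [z^n] g₂(z) / [z^n] f(z) → c₂ as n → ∞, where c₁, c₂ ≥ 0. Then [z^n] (g₁(z)·g₂(z)) / [z^n] f(z) → c₁·g₂(ρ) + c₂·g₁(ρ). If additionally c₁·g₂(ρ) + c₂·g₁(ρ) > 0, then the product g₁(z)·g₂(z) belongs to the class S_1. -/
/-!
Cut the convolution `∑ g₁(i) g₂(n - i)` at distance `M` from both ends. Since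
`f(n - i) / f(n) → ρ^i`, for fixed `M` the two ends divided by `f(n)` tend to
`c₂ ∑_{i<M} g₁(i) ρ^i` and `c₁ ∑_{i<M} g₂(i) ρ^i`. The middle is dominated by a constant times
the middle of `f * f`, and the hypothesis `(f * f)(n) / f(n) → 2 f(ρ)` makes the latter at most
`ε f(n)` for large `M` and `n`, because the two ends of `f * f` already account for `2 f(ρ)`.

For the second claim, `h = g₁ g₂` satisfies `h(n) / f(n) → L > 0`, and membership in `𝒮_1`
transfers along such proportionality: summability at `ρ` and the radius by comparison, the ratio
condition by multiplying limits, and the convolution condition by the first claim for `h * h`.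
-/

open Filter Finset Topology Asymptotics

def seqConv (a b : ℕ → ℝ) (n : ℕ) : ℝ := ∑ i ∈ range (n + 1), a i * b (n - i)

theorem tendsto_of_forall_approx {ι α : Type*} [PseudoMetricSpace α] {l : Filter ι}
    {a : ι → α} {L : α}
    (h : ∀ ε > 0, ∃ b : ι → α, ∃ β, Tendsto b l (𝓝 β) ∧ dist β L < ε ∧
      ∀ᶠ n in l, dist (a n) (b n) < ε) :
    Tendsto a l (𝓝 L) := by
  refine Metric.tendsto_nhds.2 fun ε hε => ?_
  obtain ⟨b, β, hb, hβ, hab⟩ := h (ε / 3) (by positivity)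
  filter_upwards [hab, Metric.tendsto_nhds.1 hb (ε / 3) (by positivity)] with n h₁ h₂
  calc dist (a n) L ≤ dist (a n) (b n) + dist (b n) β + dist β L := dist_triangle4 _ _ _ _
    _ < ε := by linarith

theorem seqConv_eq_head_add_middle_add_tail (a b : ℕ → ℝ) {M n : ℕ} (h : 2 * M ≤ n + 1) :
    seqConv a b n = ∑ i ∈ range M, a i * b (n - i) + ∑ i ∈ Ico M (n + 1 - M), a i * b (n - i)
      + ∑ j ∈ range M, b j * a (n - j) := by
  have htail : ∑ i ∈ Ico (n + 1 - M) (n + 1), a i * b (n - i)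
      = ∑ j ∈ range M, b j * a (n - j) := by
    refine sum_nbij' (fun i => n - i) (fun j => n - j) ?_ ?_ ?_ ?_ ?_
    all_goals intro i hi
    all_goals simp only [mem_Ico, mem_range] at hi ⊢
    all_goals first | omega | rw [Nat.sub_sub_self (by omega), mul_comm]
  rw [← htail, seqConv, range_eq_Ico, range_eq_Ico,
    sum_Ico_consecutive _ (Nat.zero_le M) (by omega : M ≤ n + 1 - M),
    sum_Ico_consecutive _ (Nat.zero_le _) (by omega : n + 1 - M ≤ n + 1)]

theorem tendsto_div_self {ι : Type*} {l : Filter ι} {f : ι → ℝ} (hf : ∀ᶠ n in l, f n ≠ 0) :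
    Tendsto (fun n => f n / f n) l (𝓝 1) :=
  tendsto_const_nhds.congr' (hf.mono fun _ hn => (div_self hn).symm)

theorem tendsto_sub_div_of_tendsto_ratio {f : ℕ → ℝ} {ρ : ℝ} (hf : ∀ᶠ n in atTop, f n ≠ 0)
    (hfρ : Tendsto (fun n => f n / f (n + 1)) atTop (𝓝 ρ)) (i : ℕ) :
    Tendsto (fun n => f (n - i) / f n) atTop (𝓝 (ρ ^ i)) := by
  induction i with
  | zero => simpa using tendsto_div_self hf
  | succ i ih =>
    have hstep : Tendsto (fun n => f (n - (i + 1)) / f (n - i)) atTop (𝓝 ρ) :=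
      (hfρ.comp (tendsto_sub_atTop_nat (i + 1))).congr' <|
        (eventually_ge_atTop (i + 1)).mono fun n hn => by
          simp only [Function.comp_apply, show n - (i + 1) + 1 = n - i by omega]
    rw [pow_succ']
    refine (hstep.mul ih).congr' ?_
    filter_upwards [(tendsto_sub_atTop_nat i).eventually hf] with n hn
    exact div_mul_div_cancel₀ hn

theorem tendsto_sub_div_of_tendsto_div {f g : ℕ → ℝ} {ρ c : ℝ} (hf : ∀ᶠ n in atTop, f n ≠ 0)
    (hfρ : Tendsto (fun n => f n / f (n + 1)) atTop (𝓝 ρ))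
    (hg : Tendsto (fun n => g n / f n) atTop (𝓝 c)) (i : ℕ) :
    Tendsto (fun n => g (n - i) / f n) atTop (𝓝 (c * ρ ^ i)) := by
  refine ((hg.comp (tendsto_sub_atTop_nat i)).mul
    (tendsto_sub_div_of_tendsto_ratio hf hfρ i)).congr' ?_
  filter_upwards [(tendsto_sub_atTop_nat i).eventually hf] with n hn
  exact div_mul_div_cancel₀ hn

theorem tendsto_sum_range_mul_sub_div {f g : ℕ → ℝ} {ρ c : ℝ} (hf : ∀ᶠ n in atTop, f n ≠ 0)
    (hfρ : Tendsto (fun n => f n / f (n + 1)) atTop (𝓝 ρ))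
    (hg : Tendsto (fun n => g n / f n) atTop (𝓝 c)) (a : ℕ → ℝ) (M : ℕ) :
    Tendsto (fun n => (∑ i ∈ range M, a i * g (n - i)) / f n) atTop
      (𝓝 (c * ∑ i ∈ range M, a i * ρ ^ i)) := by
  simp only [sum_div, mul_div_assoc, mul_sum]
  refine tendsto_finsetSum _ fun i _ => ?_
  convert (tendsto_sub_div_of_tendsto_div hf hfρ hg i).const_mul (a i) using 2
  ring

theorem tendsto_sum_middle_div {f : ℕ → ℝ} {ρ S : ℝ} (hf : ∀ᶠ n in atTop, f n ≠ 0)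
    (hfρ : Tendsto (fun n => f n / f (n + 1)) atTop (𝓝 ρ))
    (hff : Tendsto (fun n => seqConv f f n / f n) atTop (𝓝 S)) (M : ℕ) :
    Tendsto (fun n => (∑ i ∈ Ico M (n + 1 - M), f i * f (n - i)) / f n) atTop
      (𝓝 (S - 2 * ∑ i ∈ range M, f i * ρ ^ i)) := by
  have hends := tendsto_sum_range_mul_sub_div hf hfρ (tendsto_div_self hf) f M
  rw [one_mul] at hends
  rw [two_mul, ← sub_sub]
  refine ((hff.sub hends).sub hends).congr' ?_
  filter_upwards [eventually_ge_atTop (2 * M)] with n hn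
  rw [seqConv_eq_head_add_middle_add_tail f f (by omega : 2 * M ≤ n + 1)]
  ring

theorem abs_sum_middle_le {f g₁ g₂ : ℕ → ℝ} {K₁ K₂ : ℝ} {M : ℕ}
    (h₁ : ∀ i, M ≤ i → |g₁ i| ≤ K₁ * f i) (h₂ : ∀ i, M ≤ i → |g₂ i| ≤ K₂ * f i) (n : ℕ) :
    |∑ i ∈ Ico M (n + 1 - M), g₁ i * g₂ (n - i)|
      ≤ K₁ * K₂ * ∑ i ∈ Ico M (n + 1 - M), f i * f (n - i) := by
  rw [mul_sum]
  refine (abs_sum_le_sum_abs _ _).trans (sum_le_sum fun i hi => ?_)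
  rw [mem_Ico] at hi
  have hb₁ := h₁ i hi.1
  have hb₂ := h₂ (n - i) (by omega)
  calc |g₁ i * g₂ (n - i)| ≤ (K₁ * f i) * (K₂ * f (n - i)) := by
        rw [abs_mul]; exact mul_le_mul hb₁ hb₂ (abs_nonneg _) ((abs_nonneg _).trans hb₁)
    _ = K₁ * K₂ * (f i * f (n - i)) := by ring

theorem eventually_abs_le_mul_of_tendsto_div {ι : Type*} {l : Filter ι} {f g : ι → ℝ} {c : ℝ}
    (hf : ∀ᶠ n in l, 0 < f n) (hg : Tendsto (fun n => g n / f n) l (𝓝 c)) :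
    ∀ᶠ n in l, |g n| ≤ (|c| + 1) * f n := by
  filter_upwards [hg.abs.eventually_lt_const (lt_add_one |c|), hf] with n hlt hpos
  rw [abs_div, abs_of_pos hpos, div_lt_iff₀ hpos] at hlt
  exact hlt.le

theorem summable_mul_pow_of_tendsto_div {f g : ℕ → ℝ} {c r : ℝ} (hf : ∀ᶠ n in atTop, f n ≠ 0)
    (hg : Tendsto (fun n => g n / f n) atTop (𝓝 c)) (hs : Summable fun n => f n * r ^ n) :
    Summable fun n => g n * r ^ n :=
  summable_of_isBigO_nat hs <|
    (isBigO_of_div_tendsto_nhds (hf.mono fun _ hn h => absurd h hn) c hg).mul (isBigO_refl _ _)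

theorem tendsto_seqConv_div {f g₁ g₂ : ℕ → ℝ} {ρ c₁ c₂ : ℝ} (hf : ∀ᶠ n in atTop, 0 < f n)
    (hfρ : Tendsto (fun n => f n / f (n + 1)) atTop (𝓝 ρ))
    (hfs : Summable fun n => f n * ρ ^ n)
    (hff : Tendsto (fun n => seqConv f f n / f n) atTop (𝓝 (2 * ∑' n, f n * ρ ^ n)))
    (h₁ : Tendsto (fun n => g₁ n / f n) atTop (𝓝 c₁))
    (h₂ : Tendsto (fun n => g₂ n / f n) atTop (𝓝 c₂)) :
    Tendsto (fun n => seqConv g₁ g₂ n / f n) atTop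
      (𝓝 (c₁ * (∑' n, g₂ n * ρ ^ n) + c₂ * (∑' n, g₁ n * ρ ^ n))) := by
  have hf0 : ∀ᶠ n in atTop, f n ≠ 0 := hf.mono fun _ hn => hn.ne'
  have hF := hfs.hasSum.tendsto_sum_nat
  have hG₁ := (summable_mul_pow_of_tendsto_div hf0 h₁ hfs).hasSum.tendsto_sum_nat
  have hG₂ := (summable_mul_pow_of_tendsto_div hf0 h₂ hfs).hasSum.tendsto_sum_nat
  obtain ⟨N, hN⟩ := eventually_atTop.1 ((eventually_abs_le_mul_of_tendsto_div hf h₁).and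
    (eventually_abs_le_mul_of_tendsto_div hf h₂))
  set K := (|c₁| + 1) * (|c₂| + 1)
  have hK : Tendsto (fun M => K * (2 * ∑' n, f n * ρ ^ n - 2 * ∑ i ∈ range M, f i * ρ ^ i))
      atTop (𝓝 0) := by
    convert (tendsto_const_nhds.sub (hF.const_mul 2)).const_mul K using 2
    ring
  have hends := (hG₂.const_mul c₁).add (hG₁.const_mul c₂)
  refine tendsto_of_forall_approx fun ε hε => ?_
  obtain ⟨M, hMN, hMends, hMmid⟩ := ((eventually_ge_atTop N).and
    ((Metric.tendsto_nhds.1 hends ε hε).and (hK.eventually (gt_mem_nhds hε)))).exists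
  refine ⟨fun n => (∑ i ∈ range M, g₁ i * g₂ (n - i) + ∑ j ∈ range M, g₂ j * g₁ (n - j)) / f n,
    c₂ * ∑ i ∈ range M, g₁ i * ρ ^ i + c₁ * ∑ i ∈ range M, g₂ i * ρ ^ i, ?_, ?_, ?_⟩
  · simp only [add_div]
    exact (tendsto_sum_range_mul_sub_div hf0 hfρ h₂ g₁ M).add
      (tendsto_sum_range_mul_sub_div hf0 hfρ h₁ g₂ M)
  · rwa [add_comm]
  · have hmid := (tendsto_sum_middle_div hf0 hfρ hff M).const_mul K
    filter_upwards [hmid.eventually (gt_mem_nhds hMmid), eventually_ge_atTop (2 * M), hf]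
      with n hlt hn hpos
    have hbound := abs_sum_middle_le (fun i hi => (hN i (hMN.trans hi)).1)
      (fun i hi => (hN i (hMN.trans hi)).2) n
    rw [Real.dist_eq, seqConv_eq_head_add_middle_add_tail _ _ (by omega : 2 * M ≤ n + 1),
      show ∀ x y z : ℝ, (x + y + z) / f n - (x + z) / f n = y / f n from fun _ _ _ => by ring,
      abs_div, abs_of_pos hpos]
    calc _ ≤ K * (∑ i ∈ Ico M (n + 1 - M), f i * f (n - i)) / f n := by gcongr
      _ < ε := by rwa [mul_div_assoc]

theorem tendsto_ratio_of_tendsto_div {f g : ℕ → ℝ} {ρ c : ℝ} (hf : ∀ᶠ n in atTop, f n ≠ 0)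
    (hc : c ≠ 0) (hfρ : Tendsto (fun n => f n / f (n + 1)) atTop (𝓝 ρ))
    (hg : Tendsto (fun n => g n / f n) atTop (𝓝 c)) :
    Tendsto (fun n => g n / g (n + 1)) atTop (𝓝 ρ) := by
  have hg0 : ∀ᶠ n in atTop, g n ≠ 0 :=
    (hg.eventually_ne hc).mono fun n hn h => hn (by simp [h])
  have hlim := (hg.mul hfρ).mul ((hg.comp (tendsto_add_atTop_nat 1)).inv₀ hc)
  rw [mul_comm c, mul_inv_cancel_right₀ hc] at hlim
  refine hlim.congr' ?_
  filter_upwards [hf, (tendsto_add_atTop_nat 1).eventually hf,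
    (tendsto_add_atTop_nat 1).eventually hg0] with n h₁ h₂ h₃
  simp only [Function.comp_apply]
  field_simp

theorem subexpClass_one_iff {g : ℕ → ℝ} {ρ : ℝ} :
    SubexpClass 1 g ρ ↔ 0 < ρ ∧ (∀ n, 0 ≤ g n) ∧ (∀ᶠ n in atTop, 0 < g n) ∧
      Summable (fun n => g n * ρ ^ n) ∧ (∀ r : ℝ, ρ < r → ¬ Summable (fun n => g n * r ^ n)) ∧
      Tendsto (fun n => g n / g (n + 1)) atTop (𝓝 ρ) ∧
      Tendsto (fun n => seqConv g g n / g n) atTop (𝓝 (2 * ∑' n, g n * ρ ^ n)) := by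
  simp [SubexpClass, seqConv, eventually_atTop]

theorem SubexpClass.of_tendsto_div {f h : ℕ → ℝ} {ρ L : ℝ} (hf : SubexpClass 1 f ρ)
    (hh : ∀ n, 0 ≤ h n) (hL : 0 < L) (hhf : Tendsto (fun n => h n / f n) atTop (𝓝 L)) :
    SubexpClass 1 h ρ := by
  obtain ⟨hρ, -, hfpos, hfs, hfns, hfρ, hff⟩ := subexpClass_one_iff.1 hf
  have hf0 : ∀ᶠ n in atTop, f n ≠ 0 := hfpos.mono fun _ hn => hn.ne'
  have hhpos : ∀ᶠ n in atTop, 0 < h n := by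
    filter_upwards [hhf.eventually (lt_mem_nhds hL), hfpos] with n hlt hpos
    exact (div_pos_iff_of_pos_right hpos).1 hlt
  have hfh : Tendsto (fun n => f n / h n) atTop (𝓝 L⁻¹) :=
    (hhf.inv₀ hL.ne').congr fun n => inv_div _ _
  have hhh := (tendsto_seqConv_div hfpos hfρ hfs hff hhf hhf).mul hfh
  rw [← two_mul, mul_assoc, mul_comm L, mul_inv_cancel_right₀ hL.ne'] at hhh
  refine subexpClass_one_iff.2 ⟨hρ, hh, hhpos, summable_mul_pow_of_tendsto_div hf0 hhf hfs,
    fun r hr hs => hfns r hr (summable_mul_pow_of_tendsto_div (hhpos.mono fun _ hn => hn.ne')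
      hfh hs), tendsto_ratio_of_tendsto_div hf0 hL.ne' hfρ hhf, hhh.congr' ?_⟩
  filter_upwards [hf0] with n hn
  exact div_mul_div_cancel₀ hn

theorem subexp_product_general (f g₁ g₂ : ℕ → ℝ) (ρ : ℝ)
    (hf : SubexpClass 1 f ρ)
    (hg₁ : ∀ n, 0 ≤ g₁ n) (hg₂ : ∀ n, 0 ≤ g₂ n)
    (c₁ c₂ : ℝ)
    (hr₁ : Filter.Tendsto (fun n => g₁ n / f n) Filter.atTop (nhds c₁))
    (hr₂ : Filter.Tendsto (fun n => g₂ n / f n) Filter.atTop (nhds c₂)) :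
    Filter.Tendsto
      (fun n => (∑ i ∈ Finset.range (n + 1), g₁ i * g₂ (n - i)) / f n)
      Filter.atTop
      (nhds (c₁ * (∑' n, g₂ n * ρ ^ n) + c₂ * (∑' n, g₁ n * ρ ^ n))) ∧
    (0 < c₁ * (∑' n, g₂ n * ρ ^ n) + c₂ * (∑' n, g₁ n * ρ ^ n) →
      SubexpClass 1 (fun n => ∑ i ∈ Finset.range (n + 1), g₁ i * g₂ (n - i)) ρ) := by
  obtain ⟨-, -, hfpos, hfs, -, hfρ, hff⟩ := subexpClass_one_iff.1 hf
  have hlim := tendsto_seqConv_div hfpos hfρ hfs hff hr₁ hr₂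
  exact ⟨hlim, fun hL => hf.of_tendsto_div
    (fun n => sum_nonneg fun i _ => mul_nonneg (hg₁ i) (hg₂ _)) hL hlim⟩

/-- If `f ∈ 𝒮_1` with radius of convergence `ρ`, and `g₁, g₂` have non-negative coefficients
with `[z^n]gᵢ / [z^n]f → cᵢ ≥ 0`, then `[z^n](g₁ g₂) / [z^n]f → c₁ g₂(ρ) + c₂ g₁(ρ)`; if
moreover `c₁ g₂(ρ) + c₂ g₁(ρ) > 0`, then `g₁ g₂ ∈ 𝒮_1`. -/
theorem subexp_product (f g₁ g₂ : ℕ → ℝ) (ρ : ℝ)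
    (hf : SubexpClass 1 f ρ)
    (hg₁ : ∀ n, 0 ≤ g₁ n) (hg₂ : ∀ n, 0 ≤ g₂ n)
    (c₁ c₂ : ℝ) (hc₁ : 0 ≤ c₁) (hc₂ : 0 ≤ c₂)
    (hr₁ : Filter.Tendsto (fun n => g₁ n / f n) Filter.atTop (nhds c₁))
    (hr₂ : Filter.Tendsto (fun n => g₂ n / f n) Filter.atTop (nhds c₂)) :
    Filter.Tendsto
      (fun n => (∑ i ∈ Finset.range (n + 1), g₁ i * g₂ (n - i)) / f n)
      Filter.atTop
      (nhds (c₁ * (∑' n, g₂ n * ρ ^ n) + c₂ * (∑' n, g₁ n * ρ ^ n))) ∧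
    (0 < c₁ * (∑' n, g₂ n * ρ ^ n) + c₂ * (∑' n, g₁ n * ρ ^ n) →
      SubexpClass 1 (fun n => ∑ i ∈ Finset.range (n + 1), g₁ i * g₂ (n - i)) ρ) :=
  subexp_product_general f g₁ g₂ ρ hf hg₁ hg₂ c₁ c₂ hr₁ hr₂
end

section
/- Let d ≥ 1 be an integer and let (a_n)_{n ∈ dℕ} be a sequence of positive reals such that a_{n+d}/a_n → 1 as n → ∞ along multiples of d. Then there exists a sequence (t_n) of non-negative integers with t_n → ∞ and t_n < n/2 for all n, such that sup{ |a_{n+y}/a_n − 1| : 0 ≤ y ≤ t_n, d | y } → 0 as n → ∞ along multiples of d. -/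
/-!
Iterating the hypothesis, `a_{d(m+j)} / a_{dm} → 1` for each fixed `j`, hence uniformly in
`j ≤ k` for each fixed `k`. A diagonal argument lets the window `k = u m` grow with `m` slowly
enough that the convergence stays uniform over `j ≤ u m`; then `t_n = d · u (n / d)`, capped
below `n / 2`.
-/

open Filter Topology

theorem tendsto_div_add_of_tendsto_succ_div {K : Type*} [DivisionRing K] [TopologicalSpace K]
    [ContinuousMul K] {b : ℕ → K} (hb : ∀ m, b m ≠ 0)
    (h : Tendsto (fun m => b (m + 1) / b m) atTop (𝓝 1)) (j : ℕ) :
    Tendsto (fun m => b (m + j) / b m) atTop (𝓝 1) := by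
  induction j with
  | zero => simpa only [add_zero, div_self (hb _)] using tendsto_const_nhds
  | succ j ih =>
    have := (h.comp (tendsto_add_atTop_nat j)).mul ih
    rw [one_mul] at this
    exact this.congr fun m => div_mul_div_cancel₀ (hb _)

theorem Filter.exists_tendsto_atTop_eventually_forall_le_mem {α : Type*} {l : Filter α}
    [l.IsCountablyGenerated] {f : ℕ → ℕ → α} (hf : ∀ j, Tendsto (f j) atTop l) :
    ∃ u : ℕ → ℕ, Tendsto u atTop atTop ∧ ∀ s ∈ l, ∀ᶠ m in atTop, ∀ j ≤ u m, f j m ∈ s := by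
  classical
  obtain ⟨s, hs⟩ := l.exists_antitone_basis
  have hN : ∀ k, ∃ N, ∀ m ≥ N, ∀ j ≤ k, f j m ∈ s k := fun k =>
    eventually_atTop.1 <| (eventually_all_finite (Set.finite_Iic k)).2 fun j _ => hf j (hs.mem k)
  choose N hN using hN
  set u : ℕ → ℕ := fun m => Nat.findGreatest (fun k => N k ≤ m) m
  have hu : ∀ k m, max k (N k) ≤ m → k ≤ u m ∧ N (u m) ≤ m := fun k m hm =>
    ⟨Nat.le_findGreatest (le_of_max_le_left hm) (le_of_max_le_right hm),
      Nat.findGreatest_spec (P := fun k => N k ≤ m) (le_of_max_le_left hm) (le_of_max_le_right hm)⟩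
  refine ⟨u, tendsto_atTop.2 fun k => eventually_atTop.2 ⟨_, fun m hm => (hu k m hm).1⟩,
    fun t ht => ?_⟩
  obtain ⟨k, hk⟩ := hs.mem_iff.1 ht
  exact eventually_atTop.2 ⟨max k (N k), fun m hm j hj =>
    hk (hs.antitone (hu k m hm).1 (hN _ m (hu k m hm).2 j hj))⟩

theorem tendsto_iSup_abs_nhds_zero {β : Type*} {l : Filter β} {ι : β → Sort*}
    {g : ∀ b, ι b → ℝ} (h : ∀ ε > 0, ∀ᶠ b in l, ∀ i, |g b i| < ε) :
    Tendsto (fun b => ⨆ i, |g b i|) l (𝓝 0) := by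
  refine Metric.tendsto_nhds.2 fun ε hε => (h (ε / 2) (half_pos hε)).mono fun b hb => ?_
  have hsup : ⨆ i, |g b i| ≤ ε / 2 := Real.iSup_le (fun i => (hb i).le) (half_pos hε).le
  rw [Real.dist_eq, sub_zero, abs_of_nonneg (Real.iSup_nonneg fun i => abs_nonneg _)]
  linarith

/-- If `(a_n)_{n ∈ dℕ}` is a sequence of positive reals with `a_{n+d}/a_n → 1` along multiples
of `d`, then there is a sequence `(t_n)` of non-negative integers with `t_n → ∞` and
`t_n < n/2`, such that `sup { |a_{n+y}/a_n − 1| : 0 ≤ y ≤ t_n, d ∣ y } → 0` along multiples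
of `d`. -/
theorem exists_uniform_ratio_window (d : ℕ) (hd : 1 ≤ d) (a : ℕ → ℝ)
    (hpos : ∀ n, 0 < a n)
    (hratio : Filter.Tendsto (fun m => a (d * m + d) / a (d * m)) Filter.atTop (nhds 1)) :
    ∃ t : ℕ → ℕ, Filter.Tendsto t Filter.atTop Filter.atTop ∧
      (∀ n, 1 ≤ n → ((t n : ℝ) < n / 2)) ∧
      Filter.Tendsto
        (fun m => ⨆ y : {y : ℕ // y ≤ t (d * m) ∧ d ∣ y},
          |a (d * m + (y : ℕ)) / a (d * m) - 1|)
        Filter.atTop (nhds 0) := by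
  have hd0 : 0 < d := hd
  obtain ⟨u, hu_top, hu_unif⟩ := exists_tendsto_atTop_eventually_forall_le_mem
    (tendsto_div_add_of_tendsto_succ_div (b := fun m => a (d * m)) (fun m => (hpos _).ne') hratio)
  refine ⟨fun n => min (d * u (n / d)) ((n - 1) / 2), ?_, fun n hn => ?_, ?_⟩
  · refine tendsto_inf_atTop _ ?_ ((Nat.tendsto_div_const_atTop two_ne_zero).comp
      (tendsto_sub_atTop_nat 1))
    exact tendsto_atTop_mono (fun n => Nat.le_mul_of_pos_left _ hd0)
      (hu_top.comp (Nat.tendsto_div_const_atTop hd0.ne'))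
  · rw [lt_div_iff₀ two_pos]
    exact_mod_cast (by omega : min (d * u (n / d)) ((n - 1) / 2) * 2 < n)
  · refine tendsto_iSup_abs_nhds_zero fun ε hε => ?_
    filter_upwards [hu_unif _ (Metric.ball_mem_nhds 1 hε)] with m hm
    rintro ⟨_, hy, j, rfl⟩
    have hj : d * j ≤ d * u m := hy.trans <| by
      simpa only [Nat.mul_div_cancel_left m hd0] using min_le_left _ _
    simpa only [← mul_add, Metric.mem_ball, Real.dist_eq] using hm j (Nat.le_of_mul_le_mul_left hj hd0)
end

section
/- Let d ≥ 1 be an integer and let g(z) = Σ_{n≥0} g_n z^n belong to the class S_d with radius of convergence ρ. Then the coefficient sequence is heavy-tailed in the sense that for every c > 0, e^{cn}·ρ^n·g_n → ∞ as n → ∞ along multiples of d. -/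
/-!
Put `x m = ρ^{dm} g_{dm}`. The ratio condition of `𝒮_d` gives `x (m+1) / x m → 1`, so the
increments of `log x m` tend to `0` and, by Cesàro, `log x m = o(m)`. Hence
`c·dm + log x m → ∞` for every `c > 0`, which is the claim after exponentiating.
-/

open Filter Topology

theorem tendsto_inv_natCast_mul_of_tendsto_sub_zero {u : ℕ → ℝ}
    (hu : Tendsto (fun n => u (n + 1) - u n) atTop (𝓝 0)) :
    Tendsto (fun n : ℕ => (n : ℝ)⁻¹ * u n) atTop (𝓝 0) := by
  have hmean : Tendsto (fun n : ℕ => (n : ℝ)⁻¹ * (u n - u 0)) atTop (𝓝 0) := by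
    simpa only [Finset.sum_range_sub u] using hu.cesaro
  have hinit : Tendsto (fun n : ℕ => (n : ℝ)⁻¹ * u 0) atTop (𝓝 0) := by
    simpa using tendsto_inv_atTop_nhds_zero_nat.mul_const (u 0)
  simpa only [add_zero, ← mul_add, sub_add_cancel] using hmean.add hinit

theorem tendsto_inv_natCast_mul_log_of_tendsto_div_one {x : ℕ → ℝ}
    (hpos : ∀ᶠ n in atTop, 0 < x n) (hx : Tendsto (fun n => x (n + 1) / x n) atTop (𝓝 1)) :
    Tendsto (fun n : ℕ => (n : ℝ)⁻¹ * Real.log (x n)) atTop (𝓝 0) := by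
  refine tendsto_inv_natCast_mul_of_tendsto_sub_zero ?_
  have hlog := hx.log one_ne_zero
  rw [Real.log_one] at hlog
  refine hlog.congr' ?_
  filter_upwards [hpos, (tendsto_add_atTop_nat 1).eventually hpos] with n hn hn1
  exact Real.log_div hn1.ne' hn.ne'

theorem tendsto_exp_mul_mul_atTop_of_tendsto_inv_natCast_mul_log {x : ℕ → ℝ} {c : ℝ} (hc : 0 < c)
    (hpos : ∀ᶠ n in atTop, 0 < x n)
    (hlog : Tendsto (fun n : ℕ => (n : ℝ)⁻¹ * Real.log (x n)) atTop (𝓝 0)) :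
    Tendsto (fun n : ℕ => Real.exp (c * n) * x n) atTop atTop := by
  have hexponent : Tendsto (fun n : ℕ => (n : ℝ) * (c + (n : ℝ)⁻¹ * Real.log (x n)))
      atTop atTop := by
    refine tendsto_natCast_atTop_atTop.atTop_mul_pos hc ?_
    simpa using hlog.const_add c
  refine (Real.tendsto_exp_atTop.comp hexponent).congr' ?_
  filter_upwards [hpos, eventually_gt_atTop 0] with n hn hn0
  have hn0' : (n : ℝ) ≠ 0 := Nat.cast_ne_zero.mpr hn0.ne'
  rw [Function.comp_apply, mul_add, ← mul_assoc, mul_inv_cancel₀ hn0', one_mul,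
    mul_comm (n : ℝ) c, Real.exp_add, Real.exp_log hn]

namespace SubexpClass

variable {d : ℕ} {g : ℕ → ℝ} {ρ : ℝ}

theorem eventually_scaled_coeff_pos (hg : SubexpClass d g ρ) :
    ∀ᶠ m in atTop, 0 < ρ ^ (d * m) * g (d * m) := by
  obtain ⟨hd, hρ, -, -, ⟨N, hN⟩, -⟩ := hg
  filter_upwards [eventually_ge_atTop N] with m hm
  exact mul_pos (pow_pos hρ _) (hN _ (hm.trans (Nat.le_mul_of_pos_left m hd)) ⟨m, rfl⟩)

theorem tendsto_scaled_coeff_ratio (hg : SubexpClass d g ρ) :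
    Tendsto (fun m => ρ ^ (d * (m + 1)) * g (d * (m + 1)) / (ρ ^ (d * m) * g (d * m)))
      atTop (𝓝 1) := by
  obtain ⟨-, hρ, -, -, -, -, -, hratio, -⟩ := hg
  have hρd : ρ ^ d ≠ 0 := (pow_pos hρ d).ne'
  have hinv := (hratio.inv₀ hρd).const_mul (ρ ^ d)
  rw [mul_inv_cancel₀ hρd] at hinv
  refine hinv.congr fun m => ?_
  rw [mul_add_one, inv_div, pow_add, mul_assoc, mul_div_mul_left _ _ (pow_pos hρ _).ne',
    mul_div_assoc]

end SubexpClass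

/-- If `g ∈ 𝒮_d` with radius of convergence `ρ`, then the coefficients are heavy-tailed:
for every `c > 0`, `e^{cn} ρ^n g_n → ∞` along multiples of `d`. -/
theorem subexp_heavy_tailed (d : ℕ) (g : ℕ → ℝ) (ρ : ℝ)
    (hg : SubexpClass d g ρ) (c : ℝ) (hc : 0 < c) :
    Filter.Tendsto
      (fun m => Real.exp (c * (d * m : ℕ)) * ρ ^ (d * m) * g (d * m))
      Filter.atTop Filter.atTop := by
  have hcd : 0 < c * d := mul_pos hc (Nat.cast_pos.mpr hg.1)
  have hlog := tendsto_inv_natCast_mul_log_of_tendsto_div_one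
    hg.eventually_scaled_coeff_pos hg.tendsto_scaled_coeff_ratio
  convert tendsto_exp_mul_mul_atTop_of_tendsto_inv_natCast_mul_log hcd
    hg.eventually_scaled_coeff_pos hlog using 2 with m
  simp only [Nat.cast_mul, mul_assoc]
end
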